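/- arXiv:1204.2132 — 7 statements merged into one kernel-verified Lean document; each statement's English description precedes it below -/
import Mathlib

section
/- For every positive integer n, the sum over all integers j ∈ ℤ of exp(-2n·e^{-|j|/n})·e^{-2|j|/n} is at most 1/n. -/
open Real Finset

private lemma key_step (N u : ℝ) (hN : 0 < N) (hu : 0 < u) :
    Real.exp (-(2*N) * u) * u^2 ≤
      (1 / (2 * N^2 * (1 - Real.exp (-2/N)))) *
        ((2*N*(u * Real.exp (-1/N)) + 1) * Real.exp (-(2*N) * (u * Real.exp (-1/N)))
          - (2*N*u + 1) * Real.exp (-(2*N) * u)) := by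
  set E := Real.exp (-1/N) with hEdef
  have hE0 : 0 < E := Real.exp_pos _
  have hE1 : E < 1 := Real.exp_lt_one_iff.mpr (by
    rw [neg_div]
    exact neg_lt_zero.mpr (by positivity))
  have hEsq : Real.exp (-2/N) = E^2 := by
    rw [hEdef, ← Real.exp_nat_mul]
    norm_num
    ring_nf
  have hA0 : 0 < Real.exp (-(2*N)*u) := Real.exp_pos _
  set A := Real.exp (-(2*N)*u) with hAdef
  have hsplit : Real.exp (-(2*N)*(u*E)) = A * Real.exp (2*N*u*(1-E)) := by
    rw [hAdef, ← Real.exp_add]; ring_nf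
  have hs0 : 0 ≤ 2*N*u*(1-E) := mul_nonneg (by positivity) (by linarith)
  have hq := Real.quadratic_le_exp_of_nonneg hs0
  set S := Real.exp (2*N*u*(1-E)) with hSdef
  have h12 : 0 < 1 - E^2 := by nlinarith
  have hD : 0 < 2 * N^2 * (1 - Real.exp (-2/N)) := by
    rw [hEsq]; exact mul_pos (by positivity) h12
  rw [hsplit, one_div_mul_eq_div, le_div_iff₀ hD, hEsq]
  have h1 : (2*N*u+1) + 2*N^2*u^2*(1-E^2) ≤ (2*N*(u*E)+1) * S := by
    have h2 : (2*N*(u*E)+1) * (1 + 2*N*u*(1-E) + (2*N*u*(1-E))^2/2) ≤ (2*N*(u*E)+1) * S :=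
      mul_le_mul_of_nonneg_left hq (by positivity)
    nlinarith [mul_nonneg (mul_nonneg (mul_nonneg hN.le hu.le) hE0.le) (sq_nonneg (2*N*u*(1-E)))]
  nlinarith [mul_le_mul_of_nonneg_left h1 hA0.le]

private lemma final_ineq (n : ℕ) (hn : 0 < n) :
    (1 / (2 * (n:ℝ)^2 * (1 - Real.exp (-2/(n:ℝ))))) *
      (2 - (2*(n:ℝ)+1) * Real.exp (-(2*(n:ℝ)))) ≤ 1 / (n:ℝ) := by
  have hN : (0:ℝ) < (n:ℝ) := by exact_mod_cast hn
  set N := (n:ℝ) with hNdef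
  have hQ1 : Real.exp (-2/N) < 1 := Real.exp_lt_one_iff.mpr (by
    rw [neg_div]; exact neg_lt_zero.mpr (by positivity))
  have hQ0 : 0 < Real.exp (-2/N) := Real.exp_pos _
  have hD : 0 < 2 * N^2 * (1 - Real.exp (-2/N)) := by
    have : 0 < 1 - Real.exp (-2/N) := by linarith
    positivity
  rw [one_div_mul_eq_div, div_le_div_iff₀ hD hN]
  set Q := Real.exp (-2/N) with hQdef
  set P := Real.exp (-(2*N)) with hPdef
  have hP0 : 0 < P := Real.exp_pos _
  rcases eq_or_lt_of_le (Nat.one_le_iff_ne_zero.mpr hn.ne') with h1 | h2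
  · -- n = 1
    have hn1 : n = 1 := h1.symm
    subst hn1
    have : N = 1 := by norm_num [hNdef]
    rw [this] at *
    have hQP : Q = P := by rw [hQdef, hPdef]; norm_num
    rw [hQP]
    nlinarith [hP0]
  · -- n ≥ 2
    have hN2 : (2:ℝ) ≤ N := by
      have h2' : 2 ≤ n := h2
      rw [hNdef]
      exact_mod_cast h2'
    have hprod : Q * Real.exp (2/N) = 1 := by
      rw [hQdef, ← Real.exp_add]; ring_nf; exact Real.exp_zero
    have h1 : 2/N + 1 ≤ Real.exp (2/N) := Real.add_one_le_exp _
    have hQ' : Q * (N + 2) ≤ N := by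
      have h3 : Q * (2/N + 1) ≤ 1 := by
        calc Q * (2/N + 1) ≤ Q * Real.exp (2/N) := by
              exact mul_le_mul_of_nonneg_left h1 hQ0.le
          _ = 1 := hprod
      have h4 : Q * (N + 2) = Q * (2/N + 1) * N := by
        rw [mul_assoc, add_mul, div_mul_cancel₀ _ hN.ne']; ring
      rw [h4]
      calc Q * (2/N + 1) * N ≤ 1 * N := by
            exact mul_le_mul_of_nonneg_right h3 hN.le
        _ = N := one_mul N
    have hNQ : N * Q ≤ N - 1 := by
      have h5 : N * Q * (N + 2) ≤ N * N :=
        (by ring_nf; nlinarith [mul_le_mul_of_nonneg_left hQ' hN.le] : N * Q * (N + 2) ≤ N * N)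
      have h6 : N * N ≤ (N - 1) * (N + 2) := by nlinarith
      have h7 : (0:ℝ) < N + 2 := by linarith
      exact le_of_mul_le_mul_right (h5.trans h6) h7
    nlinarith [mul_le_mul_of_nonneg_left hNQ (by linarith : (0:ℝ) ≤ 2*N),
      mul_nonneg (mul_nonneg hP0.le hN.le) (by linarith : (0:ℝ) ≤ 2*N+1)]

theorem tsum_a_sq_exp_le (n : ℕ) (hn : 0 < n) :
    ∑' j : ℤ, Real.exp (-(2 * n : ℝ) * Real.exp (-|(j : ℝ)| / n)) * Real.exp (-2 * |(j : ℝ)| / n)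
      ≤ 1 / (n : ℝ) := by
  have hN : (0:ℝ) < (n:ℝ) := by exact_mod_cast hn
  set N := (n:ℝ) with hNdef
  set g : ℕ → ℝ := fun k =>
    Real.exp (-(2*N) * Real.exp (-(k:ℝ)/N)) * Real.exp (-2*(k:ℝ)/N) with hgdef
  have hgpos : ∀ k, 0 ≤ g k := fun k => by positivity
  have hQ1 : Real.exp (-2/N) < 1 := Real.exp_lt_one_iff.mpr (by
    rw [neg_div]; exact neg_lt_zero.mpr (by positivity))
  have hgle : ∀ k : ℕ, g k ≤ (Real.exp (-2/N)) ^ k := by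
    intro k
    have h1 : Real.exp (-(2*N) * Real.exp (-(k:ℝ)/N)) ≤ 1 :=
      Real.exp_le_one_iff.mpr (by
        have := Real.exp_pos (-(k:ℝ)/N)
        nlinarith)
    have h2 : Real.exp (-2*(k:ℝ)/N) = (Real.exp (-2/N)) ^ k := by
      rw [← Real.exp_nat_mul]
      congr 1
      ring
    rw [hgdef]
    simp only
    rw [h2]
    calc Real.exp (-(2*N) * Real.exp (-(k:ℝ)/N)) * (Real.exp (-2/N)) ^ k
        ≤ 1 * (Real.exp (-2/N)) ^ k := by
          exact mul_le_mul_of_nonneg_right h1 (by positivity)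
      _ = _ := one_mul _
  have hg : Summable g :=
    Summable.of_nonneg_of_le hgpos hgle
      (summable_geometric_of_lt_one (Real.exp_pos _).le hQ1)
  set f : ℤ → ℝ := fun j =>
    Real.exp (-(2 * n : ℝ) * Real.exp (-|(j : ℝ)| / n)) * Real.exp (-2 * |(j : ℝ)| / n)
    with hfdef
  have hfnat : ∀ k : ℕ, f (k : ℤ) = g k := by
    intro k
    rw [hfdef, hgdef]
    simp only
    have : |((k : ℤ) : ℝ)| = (k:ℝ) := by push_cast; exact abs_of_nonneg (Nat.cast_nonneg k)
    rw [this]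
  have hfneg : ∀ k : ℕ, f (-((k : ℤ) + 1)) = g (k + 1) := by
    intro k
    rw [hfdef, hgdef]
    simp only
    have : |((-((k:ℤ) + 1) : ℤ) : ℝ)| = ((k:ℝ) + 1) := by
      push_cast
      rw [abs_neg]
      exact abs_of_nonneg (by positivity)
    rw [this]
    push_cast
    norm_num [hNdef]
  have hfsum : Summable f := by
    apply Summable.of_nat_of_neg_add_one
    · exact hg.congr (fun k => (hfnat k).symm)
    · exact ((summable_nat_add_iff 1).mpr hg).congr (fun k => (hfneg k).symm)
  have hsplit := tsum_nat_add_neg_add_one hfsum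
  show (∑' j : ℤ, f j) ≤ 1 / N
  rw [← hsplit]
  have hcongr : (fun k : ℕ => f (k : ℤ) + f (-((k:ℤ) + 1))) = fun k => g k + g (k + 1) := by
    funext k
    rw [hfnat k, hfneg k]
  rw [show ∑' (k : ℕ), (f (k:ℤ) + f (-((k:ℤ) + 1))) = ∑' (k : ℕ), (g k + g (k+1)) from by
    rw [hcongr]]
  -- telescoping bound
  set c : ℝ := 1 / (2 * N^2 * (1 - Real.exp (-2/N))) with hcdef
  have hD : 0 < 2 * N^2 * (1 - Real.exp (-2/N)) := by
    have : 0 < 1 - Real.exp (-2/N) := by linarith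
    positivity
  have hc0 : 0 < c := by positivity
  set F : ℕ → ℝ := fun k =>
    c * ((2*N*Real.exp (-(k:ℝ)/N) + 1) * Real.exp (-(2*N) * Real.exp (-(k:ℝ)/N))) with hFdef
  have hF0 : ∀ k, 0 ≤ F k := fun k => by positivity
  have hFle : ∀ k, F k ≤ c := by
    intro k
    set y := 2*N*Real.exp (-(k:ℝ)/N) with hydef
    have hy0 : 0 ≤ y := by positivity
    have hy1 : (y + 1) * Real.exp (-y) ≤ 1 := by
      have hprod : Real.exp (-y) * Real.exp y = 1 := by
        rw [← Real.exp_add]; simp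
      nlinarith [Real.add_one_le_exp y, Real.exp_pos (-y),
        mul_nonneg (by linarith [Real.add_one_le_exp y] : (0:ℝ) ≤ Real.exp y - (y+1))
          (Real.exp_pos (-y)).le]
    have : F k = c * ((y + 1) * Real.exp (-y)) := by
      rw [hFdef]; simp only; rw [hydef]; ring_nf
    rw [this]
    calc c * ((y + 1) * Real.exp (-y)) ≤ c * 1 := by
          exact mul_le_mul_of_nonneg_left hy1 hc0.le
      _ = c := mul_one c
  have hstep : ∀ k : ℕ, g k ≤ F (k+1) - F k := by
    intro k
    set u := Real.exp (-(k:ℝ)/N) with hudef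
    have hu0 : 0 < u := Real.exp_pos _
    have e1 : u * Real.exp (-1/N) = Real.exp (-((k:ℕ)+1:ℝ)/N) := by
      rw [hudef, ← Real.exp_add]
      congr 1
      field_simp
      ring
    have e2 : Real.exp (-2*(k:ℝ)/N) = u^2 := by
      rw [hudef, sq, ← Real.exp_add]
      congr 1
      ring
    have hkey := key_step N u hN hu0
    rw [e1] at hkey
    have lhs_eq : g k = Real.exp (-(2*N) * u) * u^2 := by
      rw [hgdef]; simp only; rw [e2, hudef]
    have rhs_eq : (1 / (2 * N^2 * (1 - Real.exp (-2/N)))) *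
        ((2*N*(Real.exp (-((k:ℕ)+1:ℝ)/N)) + 1) * Real.exp (-(2*N) * (Real.exp (-((k:ℕ)+1:ℝ)/N)))
          - (2*N*u + 1) * Real.exp (-(2*N) * u)) = F (k+1) - F k := by
      rw [hFdef, hcdef]
      simp only
      rw [hudef]
      push_cast
      ring
    rw [lhs_eq]
    calc Real.exp (-(2*N) * u) * u^2 ≤ _ := hkey
      _ = F (k+1) - F k := rhs_eq
  have hbound : ∀ m : ℕ, ∑ k ∈ Finset.range m, (g k + g (k+1)) ≤ 1/N := by
    intro m
    have t1 : ∑ k ∈ Finset.range m, g k ≤ F m - F 0 := by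
      calc ∑ k ∈ Finset.range m, g k ≤ ∑ k ∈ Finset.range m, (F (k+1) - F k) :=
            Finset.sum_le_sum (fun k _ => hstep k)
        _ = F m - F 0 := Finset.sum_range_sub F m
    have t2 : ∑ k ∈ Finset.range m, g (k+1) ≤ F (m+1) - F 1 := by
      calc ∑ k ∈ Finset.range m, g (k+1) ≤ ∑ k ∈ Finset.range m, (F (k+2) - F (k+1)) :=
            Finset.sum_le_sum (fun k _ => hstep (k+1))
        _ = F (m+1) - F 1 := Finset.sum_range_sub (fun k => F (k+1)) m
    have hF0val : F 0 = c * ((2*N+1) * Real.exp (-(2*N))) := by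
      rw [hFdef]
      norm_num
    have hfinal : c * (2 - (2*N+1) * Real.exp (-(2*N))) ≤ 1/N := by
      have := final_ineq n hn
      rw [← hNdef] at this
      calc c * (2 - (2*N+1) * Real.exp (-(2*N)))
          = (1 / (2 * N^2 * (1 - Real.exp (-2/N)))) * (2 - (2*N+1) * Real.exp (-(2*N))) := by
            rw [hcdef]
        _ ≤ 1/N := by convert this using 3
    rw [Finset.sum_add_distrib]
    have := hFle m
    have := hFle (m+1)
    have := hF0 1
    have hF0v := hF0val
    nlinarith [t1, t2]
  exact Real.tsum_le_of_sum_range_le (fun k => by positivity) hbound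
end

section
/- Let g be a bijection of ℤ with w(g) := sup_j |g(j)-j| finite. Then there is a constant C'' depending only on w(g) such that for all positive integers n and all j ∈ ℤ, |a_{n,g(j)}/a_{n,j} - 1| ≤ C''·e^{-|j|/n}. -/
/-- `a n j = exp (-n e^{-|j|/n})`. -/
noncomputable def a (n : ℕ) (j : ℤ) : ℝ :=
  Real.exp (-(n : ℝ) * Real.exp (-|(j : ℝ)| / n))

/-! The ratio `a n (g j) / a n j` is `exp x` with `x = n (e^{-|j|/n} - e^{-|g j|/n})`. As
`||j| - |g j|| ≤ w`, the bound `|e^u - 1| ≤ |u| e^{|u|}` applied to `u = (|j| - |g j|)/n` gives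
`|x| ≤ w e^w e^{-|j|/n} ≤ w e^w`, and applied once more to `x` it gives the claim with
`C'' = w e^w e^{w e^w}`. -/

open Real

theorem Real.abs_exp_sub_one_le_abs_mul_exp (x : ℝ) : |exp x - 1| ≤ |x| * exp |x| := by
  have := Complex.norm_exp_sub_sum_le_norm_mul_exp x 1
  simp only [Finset.range_one, Finset.sum_singleton, pow_zero, Nat.factorial_zero,
    Nat.cast_one, div_one, pow_one, Complex.norm_real, Real.norm_eq_abs] at this
  exact_mod_cast this

theorem Real.abs_exp_sub_one_le_of_abs_le_mul {x c r : ℝ} (hc : 0 ≤ c) (hr : r ≤ 1)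
    (hx : |x| ≤ c * r) : |exp x - 1| ≤ c * exp c * r := by
  calc |exp x - 1| ≤ |x| * exp |x| := abs_exp_sub_one_le_abs_mul_exp x
    _ ≤ c * r * exp c :=
      mul_le_mul hx (exp_le_exp.mpr (hx.trans (mul_le_of_le_one_right hc hr))) (exp_pos _).le
        ((abs_nonneg x).trans hx)
    _ = c * exp c * r := by ring

theorem abs_exp_neg_sub_exp_neg_le (t s : ℝ) :
    |exp (-t) - exp (-s)| ≤ |t - s| * exp |t - s| * exp (-t) := by
  have hfac : exp (-t) - exp (-s) = -(exp (t - s) - 1) * exp (-t) := by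
    rw [neg_sub, sub_mul, one_mul, ← exp_add]; ring_nf
  rw [hfac, abs_mul, abs_neg, abs_of_pos (exp_pos _)]
  gcongr
  exact abs_exp_sub_one_le_abs_mul_exp _

theorem a_div_a (n : ℕ) (j k : ℤ) :
    a n k / a n j = exp (n * (exp (-|(j : ℝ)| / n) - exp (-|(k : ℝ)| / n))) := by
  rw [a, a, ← exp_sub]; ring_nf

theorem abs_mul_exp_neg_abs_div_sub_le {n w x y : ℝ} (hn : 1 ≤ n) (hxy : |y - x| ≤ w) :
    |n * (exp (-|x| / n) - exp (-|y| / n))| ≤ w * exp w * exp (-|x| / n) := by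
  have hn0 : 0 < n := by linarith
  have hw : 0 ≤ w := (abs_nonneg _).trans hxy
  have hts : |(|x| / n) - |y| / n| ≤ w / n := by
    rw [← sub_div, abs_div, abs_of_pos hn0]
    gcongr
    exact (abs_abs_sub_abs_le_abs_sub x y).trans (abs_sub_comm x y ▸ hxy)
  have hwn : w / n ≤ w := div_le_self hw hn
  simp only [neg_div]
  rw [abs_mul, abs_of_pos hn0]
  calc n * |exp (-(|x| / n)) - exp (-(|y| / n))|
      ≤ n * (w / n * exp w * exp (-(|x| / n))) := by
        gcongr
        refine (abs_exp_neg_sub_exp_neg_le _ _).trans ?_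
        gcongr
        exact hts.trans hwn
    _ = w * exp w * exp (-(|x| / n)) := by field_simp

theorem ratio_a_sub_one_le (w : ℝ) :
    ∃ C'' : ℝ, ∀ g : Equiv.Perm ℤ, (∀ j : ℤ, |(g j : ℝ) - j| ≤ w) →
      ∀ n : ℕ, 0 < n → ∀ j : ℤ,
        |a n (g j) / a n j - 1| ≤ C'' * Real.exp (-|(j : ℝ)| / n) := by
  refine ⟨w * exp w * exp (w * exp w), fun g hg n hn j => ?_⟩
  have hw : 0 ≤ w := (abs_nonneg _).trans (hg 0)
  have hn1 : (1 : ℝ) ≤ n := by exact_mod_cast hn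
  have hdecay : exp (-|(j : ℝ)| / n) ≤ 1 :=
    exp_le_one_iff.mpr (div_nonpos_of_nonpos_of_nonneg (by simp) n.cast_nonneg)
  rw [a_div_a]
  exact abs_exp_sub_one_le_of_abs_le_mul (by positivity) hdecay
    (abs_mul_exp_neg_abs_div_sub_le hn1 (hg j))
end

section
/- Let g be a bijection of ℤ with c := sup_j |g(j)-j| finite. Define b₀ = |g(0)|, b_j = |g(j)| + |g(-j)| - 2j for j > 0, and B(u) = Σ_{0 ≤ j ≤ u} b_j. Then for every real u > c we have -2c² ≤ B(u) ≤ 4c². -/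
theorem partial_sum_b_bounds (g : Equiv.Perm ℤ) (c : ℝ)
    (hc : ∀ j : ℤ, |(g j : ℝ) - j| ≤ c)
    (b : ℕ → ℝ)
    (hb0 : b 0 = |(g 0 : ℝ)|)
    (hb : ∀ j : ℕ, 0 < j → b j = |(g j : ℝ)| + |(g (-(j : ℤ)) : ℝ)| - 2 * j)
    (u : ℝ) (hu : c < u) :
    -2 * c ^ 2 ≤ ∑ j ∈ Finset.range (⌊u⌋₊ + 1), b j ∧
      ∑ j ∈ Finset.range (⌊u⌋₊ + 1), b j ≤ 4 * c ^ 2 := by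
  have hc0 : 0 ≤ c := le_trans (abs_nonneg _) (by simpa using hc 0)
  set n := ⌊u⌋₊ with hn
  -- Step 1: rewrite the sum as a sum over Icc (-n) n
  have key : ∀ N : ℕ, ∑ j ∈ Finset.range (N+1), b j
      = ∑ j ∈ Finset.Icc (-(N:ℤ)) (N:ℤ), (|(g j : ℝ)| - |(j:ℝ)|) := by
    intro N
    induction N with
    | zero => simpa using hb0
    | succ N ih =>
      rw [Finset.sum_range_succ, ih, hb _ (Nat.succ_pos N)]
      have h1 : Finset.Icc (-((N+1:ℕ):ℤ)) ((N+1:ℕ):ℤ)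
          = insert (-((N:ℤ)+1)) (insert ((N:ℤ)+1) (Finset.Icc (-(N:ℤ)) (N:ℤ))) := by
        ext x
        simp only [Finset.mem_Icc, Finset.mem_insert]
        push_cast
        omega
      rw [h1, Finset.sum_insert, Finset.sum_insert]
      · push_cast
        rw [abs_neg, abs_of_nonneg (by positivity : (0:ℝ) ≤ (N:ℝ)+1)]
        ring
      · simp only [Finset.mem_Icc]; omega
      · simp only [Finset.mem_insert, Finset.mem_Icc]; omega
  rw [key n]
  set I : Finset ℤ := Finset.Icc (-(n:ℤ)) (n:ℤ) with hI
  set J : Finset ℤ := I.image g with hJ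
  have hsum : ∑ j ∈ I, (|(g j : ℝ)| - |(j:ℝ)|)
      = ∑ k ∈ J \ I, |(k:ℝ)| - ∑ k ∈ I \ J, |(k:ℝ)| := by
    rw [Finset.sum_sub_distrib, Finset.sum_sdiff_sub_sum_sdiff]
    congr 1
    rw [hJ, Finset.sum_image (fun a _ b _ h => g.injective h)]
  rw [hsum]
  have hcardJ : J.card = I.card := Finset.card_image_of_injective _ g.injective
  have hcardEF : (J \ I).card = (I \ J).card := by
    have h1 := Finset.card_sdiff_add_card_inter J I
    have h2 := Finset.card_sdiff_add_card_inter I J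
    rw [Finset.inter_comm] at h2
    omega
  -- bounds on elements of E = J \ I
  have hE : ∀ k ∈ J \ I, (n:ℝ) ≤ |(k:ℝ)| ∧ |(k:ℝ)| ≤ (n:ℝ) + c := by
    intro k hk
    rw [Finset.mem_sdiff] at hk
    obtain ⟨hkJ, hkI⟩ := hk
    obtain ⟨j, hj, rfl⟩ := Finset.mem_image.mp hkJ
    rw [hI, Finset.mem_Icc] at hj
    rw [hI, Finset.mem_Icc] at hkI
    have habsZ : (n:ℤ) + 1 ≤ |(g j : ℤ)| := by
      have h : ¬ |(g j : ℤ)| ≤ (n:ℤ) := fun h => hkI ⟨(abs_le.1 h).1, (abs_le.1 h).2⟩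
      exact Int.add_one_le_iff.mpr (lt_of_not_ge h)
    constructor
    · have : ((n:ℤ) : ℝ) + 1 ≤ ((|(g j : ℤ)| : ℤ) : ℝ) := by exact_mod_cast habsZ
      rw [Int.cast_abs] at this
      push_cast at this ⊢
      linarith
    · have habsj : |(j:ℝ)| ≤ (n:ℝ) := by
        rw [← Int.cast_natCast, ← Int.cast_abs]
        exact_mod_cast abs_le.mpr hj
      calc |((g j : ℤ) : ℝ)| = |(((g j : ℤ) : ℝ) - j) + j| := by ring_nf
        _ ≤ |((g j : ℤ) : ℝ) - j| + |(j:ℝ)| := abs_add_le _ _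
        _ ≤ c + (n:ℝ) := add_le_add (hc j) habsj
        _ = (n:ℝ) + c := by ring
  -- bounds on elements of F = I \ J
  have hF : ∀ k ∈ I \ J, (n:ℝ) - c ≤ |(k:ℝ)| ∧ |(k:ℝ)| ≤ (n:ℝ) := by
    intro k hk
    rw [Finset.mem_sdiff] at hk
    obtain ⟨hkI, hkJ⟩ := hk
    rw [hI, Finset.mem_Icc] at hkI
    have habsk : |(k:ℝ)| ≤ (n:ℝ) := by
      rw [← Int.cast_natCast, ← Int.cast_abs]
      exact_mod_cast abs_le.mpr hkI
    refine ⟨?_, habsk⟩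
    -- the preimage j = g⁻¹ k is outside I
    set j := g.symm k with hjdef
    have hgj : g j = k := g.apply_symm_apply k
    have hjI : j ∉ I := by
      intro hmem
      exact hkJ (Finset.mem_image.mpr ⟨j, hmem, hgj⟩)
    rw [hI, Finset.mem_Icc] at hjI
    have habsZ : (n:ℤ) + 1 ≤ |j| := by
      have h : ¬ |j| ≤ (n:ℤ) := fun h => hjI ⟨(abs_le.1 h).1, (abs_le.1 h).2⟩
      exact Int.add_one_le_iff.mpr (lt_of_not_ge h)
    have habsjR : (n:ℝ) + 1 ≤ |(j:ℝ)| := by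
      have : ((n:ℤ) : ℝ) + 1 ≤ ((|j| : ℤ) : ℝ) := by exact_mod_cast habsZ
      rw [Int.cast_abs] at this
      push_cast at this ⊢
      linarith
    have hdisp : |(k:ℝ) - j| ≤ c := by
      have := hc j
      rwa [hgj] at this
    have : |(j:ℝ)| ≤ |(k:ℝ)| + c := by
      calc |(j:ℝ)| = |((j:ℝ) - k) + k| := by ring_nf
        _ ≤ |(j:ℝ) - k| + |(k:ℝ)| := abs_add_le _ _
        _ = |(k:ℝ) - j| + |(k:ℝ)| := by rw [abs_sub_comm]
        _ ≤ c + |(k:ℝ)| := by linarith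
        _ = |(k:ℝ)| + c := by ring
    linarith
  -- cardinality bound: |E| ≤ 2c
  set m := ⌊c⌋₊ with hm
  have hmc : (m:ℝ) ≤ c := Nat.floor_le hc0
  have hEsub : J \ I ⊆ Finset.Icc (-((n:ℤ)+m)) ((n:ℤ)+m) \ I := by
    intro k hk
    have hb := hE k hk
    rw [Finset.mem_sdiff] at hk ⊢
    refine ⟨?_, hk.2⟩
    rw [Finset.mem_Icc]
    have h1 : |(k:ℝ)| ≤ (n:ℝ) + c := hb.2
    have h2 : c < (m:ℝ) + 1 := Nat.lt_floor_add_one c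
    have h3 : ((|k| : ℤ) : ℝ) < ((n:ℤ) + m : ℤ) + 1 := by
      rw [Int.cast_abs]
      push_cast
      linarith
    have h4 : |k| < (n:ℤ) + m + 1 := by exact_mod_cast h3
    have := abs_le (a := k) (b := (n:ℤ) + m)
    omega
  have hcardE : ((J \ I).card : ℝ) ≤ 2 * c := by
    have h1 : (J \ I).card ≤ (Finset.Icc (-((n:ℤ)+m)) ((n:ℤ)+m) \ I).card :=
      Finset.card_le_card hEsub
    have h2 : (Finset.Icc (-((n:ℤ)+m)) ((n:ℤ)+m) \ I).card = 2 * m := by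
      rw [Finset.card_sdiff_of_subset]
      · rw [hI, Int.card_Icc, Int.card_Icc]
        omega
      · rw [hI]
        intro x hx
        rw [Finset.mem_Icc] at hx ⊢
        omega
    have : ((J \ I).card : ℝ) ≤ (2 * m : ℕ) := by exact_mod_cast h1.trans_eq h2
    push_cast at this
    linarith
  -- now the two bounds
  have hlowE : ∑ k ∈ J \ I, (n:ℝ) ≤ ∑ k ∈ J \ I, |(k:ℝ)| :=
    Finset.sum_le_sum fun k hk => (hE k hk).1
  have hupE : ∑ k ∈ J \ I, |(k:ℝ)| ≤ ∑ k ∈ J \ I, ((n:ℝ) + c) :=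
    Finset.sum_le_sum fun k hk => (hE k hk).2
  have hlowF : ∑ k ∈ I \ J, ((n:ℝ) - c) ≤ ∑ k ∈ I \ J, |(k:ℝ)| :=
    Finset.sum_le_sum fun k hk => (hF k hk).1
  have hupF : ∑ k ∈ I \ J, |(k:ℝ)| ≤ ∑ k ∈ I \ J, (n:ℝ) :=
    Finset.sum_le_sum fun k hk => (hF k hk).2
  rw [Finset.sum_const, nsmul_eq_mul] at hlowE hupE hlowF hupF
  have hcard' : (((J \ I).card : ℕ) : ℝ) = (((I \ J).card : ℕ) : ℝ) := by
    exact_mod_cast hcardEF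
  constructor
  · nlinarith [sq_nonneg c]
  · nlinarith [sq_nonneg c, Nat.cast_nonneg (α := ℝ) (J \ I).card]
end

section
/- Let g be a bijection of ℤ with bounded displacement, i.e., sup_j |g(j)-j| < ∞, and let a_{n,j} = exp(-n·e^{-|j|/n}). Then F_n(g) := Σ_{j∈ℤ} (a_{n,j}²/(1+a_{n,j}²))·e^{-|j|/n}·(|g(j)| - |j|) converges to 0 as n → ∞. -/
open Filter

/-!
With `x = e^{-|j|/n}` one has `a_{n,j}² = e^{-2nx}`, so `F_n(g) = ∑ⱼ w(|j|) dⱼ` where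
`w(r) = W(e^{-r/n})`, `W(x) = x / (1 + e^{2nx})` and `dⱼ = |g j| - |j|`. Summation by parts over
the balls `[-r, r]` gives `∑_{|j| ≤ N} w(|j|) dⱼ = w(N) S_N + ∑_{r < N} (w(r) - w(r+1)) S_r` with
`S_r = ∑_{|j| ≤ r} dⱼ`. If `g` moves points by at most `K`, only the at most `2K` points crossing
the boundary of `[-r, r]` contribute to `S_r`, so `|S_r| ≤ 4K²`. On `x ≥ 0` we have
`|W'(x)| ≤ 2e^{-nx}`, so the total variation of `w` is at most `2/n`. Hence `|F_n(g)| ≤ 8K²/n`.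
-/

open Finset Real

lemma abs_sum_le_card_mul {ι R : Type*} [Ring R] [LinearOrder R] [IsOrderedRing R]
    (s : Finset ι) (f : ι → R) {K : R} (h : ∀ k ∈ s, |f k| ≤ K) : |∑ k ∈ s, f k| ≤ #s * K :=
  (abs_sum_le_sum_abs f s).trans (by simpa using sum_le_card_nsmul s _ K h)

lemma abs_abs_sub_le_of_mem_Icc_of_notMem {r K j k : ℤ} (hj : j ∈ Icc (-r) r)
    (hk : k ∉ Icc (-r) r) (hjk : |k - j| ≤ K) : |(|k| - r)| ≤ K ∧ |(|j| - r)| ≤ K := by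
  rw [mem_Icc] at hj hk
  rw [abs_le] at hjk ⊢
  rw [abs_le]
  rcases abs_cases k with ⟨hk1, _⟩ | ⟨hk1, _⟩ <;> rcases abs_cases j with ⟨hj1, _⟩ | ⟨hj1, _⟩ <;>
    rw [hk1, hj1] <;> omega

lemma abs_sum_Icc_abs_perm_sub_abs_le (g : Equiv.Perm ℤ) {K : ℕ} (hK : ∀ j, |g j - j| ≤ K)
    (r : ℕ) : |∑ j ∈ Icc (-(r : ℤ)) r, (|g j| - |j|)| ≤ 4 * K ^ 2 := by
  set I := Icc (-(r : ℤ)) r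
  set A := I.map g.toEmbedding
  set f : ℤ → ℤ := fun k => |k| - r
  have hA : ∀ k ∈ A \ I, |f k| ≤ K := by
    intro k hk
    obtain ⟨hkA, hkI⟩ := mem_sdiff.1 hk
    obtain ⟨j, hj, rfl⟩ := mem_map.1 hkA
    exact (abs_abs_sub_le_of_mem_Icc_of_notMem hj hkI (hK j)).1
  have hI : ∀ k ∈ I \ A, |f k| ≤ K := by
    intro k hk
    obtain ⟨hkI, hkA⟩ := mem_sdiff.1 hk
    have hj : g.symm k ∉ I := fun h => hkA (mem_map.2 ⟨_, h, g.apply_symm_apply k⟩)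
    have hdisp := hK (g.symm k)
    rw [g.apply_symm_apply, abs_sub_comm] at hdisp
    exact (abs_abs_sub_le_of_mem_Icc_of_notMem hkI hj hdisp).2
  have hcard : #(I \ A) = #(A \ I) := card_sdiff_comm (card_map _).symm
  have hN : #(A \ I) ≤ 2 * K := by
    have hsub : A \ I ⊆ Icc (-(r + K : ℤ)) (r + K) \ I := by
      intro k hk
      refine mem_sdiff.2 ⟨?_, (mem_sdiff.1 hk).2⟩
      have hk' := abs_le.1 (hA k hk)
      rw [mem_Icc]
      rcases abs_cases k with ⟨hk1, _⟩ | ⟨hk1, _⟩ <;> simp only [f, hk1] at hk' <;> omega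
    have := card_le_card hsub
    rw [card_sdiff_of_subset (Icc_subset_Icc (by omega) (by omega)), Int.card_Icc,
      Int.card_Icc] at this
    omega
  have hsum : ∑ j ∈ I, (|g j| - |j|) = ∑ k ∈ A \ I, f k - ∑ k ∈ I \ A, f k := by
    rw [sum_sdiff_sub_sum_sdiff, sum_map]
    simp [f]
  rw [hsum]
  calc |∑ k ∈ A \ I, f k - ∑ k ∈ I \ A, f k|
      ≤ |∑ k ∈ A \ I, f k| + |∑ k ∈ I \ A, f k| := abs_sub _ _
    _ ≤ #(A \ I) * K + #(I \ A) * K :=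
        add_le_add (abs_sum_le_card_mul _ _ hA) (abs_sum_le_card_mul _ _ hI)
    _ ≤ 4 * K ^ 2 := by rw [hcard]; nlinarith

lemma sum_Icc_neg_succ {M : Type*} [AddCommMonoid M] (h : ℤ → M) (N : ℕ) :
    ∑ j ∈ Icc (-(N + 1 : ℕ) : ℤ) (N + 1 : ℕ), h j
      = ∑ j ∈ Icc (-(N : ℤ)) N, h j + (h (N + 1) + h (-(N + 1))) := by
  have hIcc : Icc (-(N + 1 : ℕ) : ℤ) (N + 1 : ℕ)
      = insert (N + 1 : ℤ) (insert (-(N + 1 : ℤ)) (Icc (-(N : ℤ)) N)) := by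
    ext k; simp only [mem_Icc, mem_insert]; omega
  rw [hIcc, sum_insert (by simp; omega), sum_insert (by simp)]
  abel

lemma sum_Icc_natAbs_mul_eq {R : Type*} [CommRing R] (f : ℕ → R) (h : ℤ → R) (N : ℕ) :
    ∑ j ∈ Icc (-(N : ℤ)) N, f j.natAbs * h j
      = f N * ∑ j ∈ Icc (-(N : ℤ)) N, h j
        + ∑ r ∈ range N, (f r - f (r + 1)) * ∑ j ∈ Icc (-(r : ℤ)) r, h j := by
  induction N with
  | zero => simp
  | succ N ih =>
    rw [sum_Icc_neg_succ, sum_Icc_neg_succ, ih, sum_range_succ]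
    simp only [Int.natAbs_neg]
    rw [show ((N : ℤ) + 1).natAbs = N + 1 by omega]
    ring

lemma abs_sum_Icc_natAbs_mul_le (f : ℕ → ℝ) (h : ℤ → ℝ) {B : ℝ}
    (hB : ∀ r : ℕ, |∑ j ∈ Icc (-(r : ℤ)) r, h j| ≤ B) (N : ℕ) :
    |∑ j ∈ Icc (-(N : ℤ)) N, f j.natAbs * h j|
      ≤ B * (|f N| + ∑ r ∈ range N, |f r - f (r + 1)|) := by
  rw [sum_Icc_natAbs_mul_eq, mul_add, mul_sum (range N)]
  refine (abs_add_le _ _).trans (add_le_add ?_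
    ((abs_sum_le_sum_abs _ _).trans (sum_le_sum fun r _ => ?_)))
  · rw [abs_mul, mul_comm]; exact mul_le_mul_of_nonneg_right (hB N) (abs_nonneg _)
  · rw [abs_mul, mul_comm]; exact mul_le_mul_of_nonneg_right (hB r) (abs_nonneg _)

/-- No summability is needed: a non-summable `f` has `∑' j, f j = 0`. -/
lemma norm_tsum_le_of_forall_norm_sum_Icc_le {E : Type*} [NormedAddCommGroup E] {f : ℤ → E}
    {C : ℝ} (h : ∀ N : ℕ, ‖∑ j ∈ Icc (-(N : ℤ)) N, f j‖ ≤ C) : ‖∑' j, f j‖ ≤ C := by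
  by_cases hf : Summable f
  · exact le_of_tendsto ((continuous_norm.tendsto _).comp (hf.hasSum.comp tendsto_Icc_neg))
      (Eventually.of_forall h)
  · rw [tsum_eq_zero_of_not_summable hf, norm_zero]
    exact (norm_nonneg _).trans (h 0)

noncomputable def weight (n x : ℝ) : ℝ := x / (1 + exp (2 * n * x))

lemma hasDerivAt_weight (n x : ℝ) :
    HasDerivAt (weight n)
      ((1 + exp (2 * n * x) - x * (exp (2 * n * x) * (2 * n))) / (1 + exp (2 * n * x)) ^ 2) x := by
  have hd : HasDerivAt (fun y => 1 + exp (2 * n * y)) (exp (2 * n * x) * (2 * n)) x := by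
    simpa using ((hasDerivAt_id x).const_mul (2 * n)).exp.const_add 1
  have h := (hasDerivAt_id' x).div hd (by positivity)
  rwa [one_mul] at h

lemma abs_deriv_weight_le {n x : ℝ} (hn : 0 < n) (hx : 0 ≤ x) :
    |(1 + exp (2 * n * x) - x * (exp (2 * n * x) * (2 * n))) / (1 + exp (2 * n * x)) ^ 2|
      ≤ 2 * exp (-(n * x)) := by
  set E := exp (n * x) with hE
  have hE2 : exp (2 * n * x) = E ^ 2 := by rw [hE, ← exp_nat_mul]; ring_nf
  have hE1 : n * x ≤ E - 1 := by linarith [add_one_le_exp (n * x)]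
  have hEpos : 0 < E := exp_pos _
  have hnx : 0 ≤ n * x * E ^ 3 := by positivity
  have hnxE : n * x * E ^ 3 ≤ (E - 1) * E ^ 3 := mul_le_mul_of_nonneg_right hE1 (by positivity)
  rw [hE2, exp_neg, ← hE, abs_div, abs_of_pos (by positivity : (0 : ℝ) < (1 + E ^ 2) ^ 2),
    div_le_iff₀ (by positivity), abs_le, mul_comm 2, mul_assoc, inv_mul_eq_div, le_div_iff₀ hEpos,
    neg_le, le_div_iff₀ hEpos]
  constructor <;> nlinarith [sq_nonneg (E - 1)]

lemma abs_sub_le_sub_of_abs_deriv_le {f f' G G' : ℝ → ℝ} {a b : ℝ} (hab : a ≤ b)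
    (hf : ∀ x ∈ Set.Icc a b, HasDerivAt f (f' x) x) (hG : ∀ x, HasDerivAt G (G' x) x)
    (h : ∀ x ∈ Set.Ico a b, |f' x| ≤ G' x) : |f b - f a| ≤ G b - G a :=
  image_norm_le_of_norm_deriv_right_le_deriv_boundary (f := fun x => f x - f a)
    (B := fun x => G x - G a)
    (fun x hx => ((hf x hx).continuousAt.sub continuousAt_const).continuousWithinAt)
    (fun x hx => ((hf x (Set.Ico_subset_Icc_self hx)).sub_const (f a)).hasDerivWithinAt)
    (by simp) (fun x => (hG x).sub_const (G a)) h (Set.right_mem_Icc.2 hab)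

lemma abs_weight_sub_le {n a b : ℝ} (hn : 0 < n) (ha : 0 ≤ a) (hab : a ≤ b) :
    |weight n b - weight n a| ≤ 2 / n * (exp (-(n * a)) - exp (-(n * b))) := by
  have hG : ∀ x, HasDerivAt (fun y => -(2 / n) * exp (-(n * y))) (2 * exp (-(n * x))) x := by
    intro x
    have h : HasDerivAt (fun y => -(n * y)) (-n) x := by
      simpa using ((hasDerivAt_id' x).const_mul n).fun_neg
    exact (h.exp.const_mul _).congr_deriv (by field_simp)
  have := abs_sub_le_sub_of_abs_deriv_le hab (fun x _ => hasDerivAt_weight n x) hG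
    (fun x hx => abs_deriv_weight_le hn (ha.trans hx.1))
  linarith

lemma abs_weight_add_sum_abs_sub_le {n : ℝ} (hn : 0 < n) {x : ℕ → ℝ} (hx : Antitone x)
    (hx0 : ∀ r, 0 ≤ x r) (N : ℕ) :
    |weight n (x N)| + ∑ r ∈ range N, |weight n (x r) - weight n (x (r + 1))| ≤ 2 / n := by
  set V : ℕ → ℝ := fun r => exp (-(n * x r))
  have hlast : |weight n (x N)| ≤ 2 / n * (1 - V N) := by
    simpa [weight] using abs_weight_sub_le hn le_rfl (hx0 N)
  have hsum : ∑ r ∈ range N, |weight n (x r) - weight n (x (r + 1))| ≤ 2 / n * (V N - V 0) := by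
    rw [← sum_range_sub, mul_sum]
    exact sum_le_sum fun r _ => abs_weight_sub_le hn (hx0 _) (hx r.le_succ)
  have : 0 ≤ 2 / n * V 0 := by positivity
  linarith

lemma a_sq_div_mul_exp_eq_weight (n : ℕ) (j : ℤ) :
    a n j ^ 2 / (1 + a n j ^ 2) * exp (-|(j : ℝ)| / n)
      = weight n (exp (-(j.natAbs : ℝ) / n)) := by
  have ha : a n j ^ 2 = (exp (2 * n * exp (-(j.natAbs : ℝ) / n)))⁻¹ := by
    rw [a, ← exp_nat_mul, ← exp_neg, Nat.cast_natAbs, Int.cast_abs]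
    ring_nf
  rw [ha, weight, Nat.cast_natAbs, Int.cast_abs]
  field_simp
  ring

lemma abs_F_le (g : Equiv.Perm ℤ) {K : ℕ} (hK : ∀ j, |g j - j| ≤ K) {n : ℕ} (hn : 0 < n) :
    |∑' j : ℤ, a n j ^ 2 / (1 + a n j ^ 2) * exp (-|(j : ℝ)| / n) * (|(g j : ℝ)| - |(j : ℝ)|)|
      ≤ 8 * (K : ℝ) ^ 2 / n := by
  have hn' : (0 : ℝ) < n := Nat.cast_pos.2 hn
  simp_rw [a_sq_div_mul_exp_eq_weight]
  rw [← Real.norm_eq_abs]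
  refine norm_tsum_le_of_forall_norm_sum_Icc_le fun N => ?_
  rw [Real.norm_eq_abs]
  have hS : ∀ r : ℕ, |∑ j ∈ Icc (-(r : ℤ)) r, (|(g j : ℝ)| - |(j : ℝ)|)| ≤ 4 * K ^ 2 :=
    fun r => by exact_mod_cast abs_sum_Icc_abs_perm_sub_abs_le g hK r
  have hx : Antitone fun r : ℕ => exp (-(r : ℝ) / n) := fun r s hrs =>
    exp_le_exp.2 <| div_le_div_of_nonneg_right (neg_le_neg (Nat.cast_le.2 hrs)) hn'.le
  have hw := abs_weight_add_sum_abs_sub_le hn' hx (fun r => (exp_pos _).le) N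
  calc _ ≤ _ := abs_sum_Icc_natAbs_mul_le (fun r : ℕ => weight n (exp (-(r : ℝ) / n))) _ hS N
    _ ≤ 4 * K ^ 2 * (2 / n) := by gcongr
    _ = 8 * K ^ 2 / n := by ring

theorem F_tendsto_zero (g : Equiv.Perm ℤ) (hg : ∃ c : ℝ, ∀ j : ℤ, |(g j : ℝ) - j| ≤ c) :
    Tendsto (fun n : ℕ =>
        ∑' j : ℤ, a n j ^ 2 / (1 + a n j ^ 2) * Real.exp (-|(j : ℝ)| / n)
          * (|(g j : ℝ)| - |(j : ℝ)|))
      atTop (nhds 0) := by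
  obtain ⟨c, hc⟩ := hg
  have hK : ∀ j, |g j - j| ≤ (⌈c⌉₊ : ℤ) := fun j => by
    have : |(g j : ℝ) - j| ≤ ⌈c⌉₊ := (hc j).trans (Nat.le_ceil c)
    exact_mod_cast this
  refine squeeze_zero_norm' ?_ (tendsto_const_div_atTop_nhds_zero_nat (8 * (⌈c⌉₊ : ℝ) ^ 2))
  filter_upwards [eventually_gt_atTop 0] with n hn
  exact abs_F_le g hK hn
end

section
/- For the functions f_n(x) = exp(-n·Σ_{j∈ℤ} x_j e^{-|j|/n}) on {0,1}^ℤ with the symmetric Bernoulli measure, and for every bijection g of ℤ of bounded displacement acting on {0,1}^ℤ by permuting coordinates, the ratio ⟨g·f_n, f_n⟩ / ‖f_n‖² equals Π_{j∈ℤ} (1 + a_{n,j}·a_{n,g(j)})/(1 + a_{n,j}²), where a_{n,j} = exp(-n·e^{-|j|/n}). -/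
open Filter MeasureTheory Topology

/-- The density `f_n (x) = exp (-n ∑_j x_j e^{-|j|/n})` on the Bernoulli space
`{0,1}^ℤ`, modelled as `ℤ → Bool`. -/
noncomputable def f (n : ℕ) (x : ℤ → Bool) : ℝ :=
  Real.exp (-(n : ℝ) * ∑' j : ℤ, (if x j then (1 : ℝ) else 0) * Real.exp (-|(j : ℝ)| / n))

section Aux

lemma hasProd_exp {ι : Type*} {t : ι → ℝ} {s : ℝ} (h : HasSum t s) :
    HasProd (fun j => Real.exp (t j)) (Real.exp s) := by
  have heq : (fun S : Finset ι => ∏ i ∈ S, Real.exp (t i))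
      = (fun r : ℝ => Real.exp r) ∘ (fun S : Finset ι => ∑ i ∈ S, t i) := by
    funext S
    simp [Real.exp_sum]
  rw [HasProd, heq]
  exact (Real.continuous_exp.tendsto s).comp h

lemma measurableSet_cyl (s : Finset ℤ) (b : ℤ → Bool) :
    MeasurableSet {x : ℤ → Bool | ∀ i ∈ s, x i = b i} := by
  have h : {x : ℤ → Bool | ∀ i ∈ s, x i = b i} = ⋂ i ∈ (s : Set ℤ), (fun x : ℤ → Bool => x i) ⁻¹' {b i} := by
    ext x; simp
  rw [h]
  exact MeasurableSet.biInter s.countable_toSet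
    (fun i _ => (measurable_pi_apply i) (measurableSet_singleton (b i)))

lemma integral_prod_coord (μ : Measure (ℤ → Bool)) [IsProbabilityMeasure μ]
    (hμ : ∀ (s : Finset ℤ) (b : ℤ → Bool),
      μ {x | ∀ i ∈ s, x i = b i} = (1 / 2 : ENNReal) ^ s.card)
    (s : Finset ℤ) (φ : ℤ → Bool → ℝ) :
    ∫ x, ∏ j ∈ s, φ j (x j) ∂μ = ∏ j ∈ s, ((φ j false + φ j true) / 2) := by
  classical
  set c : ({j // j ∈ s} → Bool) → ℝ := fun ε => ∏ j : {j // j ∈ s}, φ j (ε j) with hc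
  set bb : ({j // j ∈ s} → Bool) → (ℤ → Bool) :=
    fun ε i => if h : i ∈ s then ε ⟨i, h⟩ else false with hbb
  set A : ({j // j ∈ s} → Bool) → Set (ℤ → Bool) := fun ε => {x | ∀ i ∈ s, x i = bb ε i} with hA
  have hAmeas : ∀ ε, MeasurableSet (A ε) := fun ε => measurableSet_cyl s (bb ε)
  have hpt : ∀ x : ℤ → Bool, ∏ j ∈ s, φ j (x j)
      = ∑ ε : {j // j ∈ s} → Bool, Set.indicator (A ε) (fun _ => c ε) x := by
    intro x
    rw [Finset.sum_eq_single (fun j : {j // j ∈ s} => x j)]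
    · have hx : x ∈ A (fun j : {j // j ∈ s} => x j) := by
        intro i hi
        simp [hbb, hi]
      rw [Set.indicator_of_mem hx]
      simp only [hc]
      exact (Finset.prod_coe_sort s (fun j => φ j (x j))).symm
    · intro ε _ hne
      have hx : x ∉ A ε := by
        intro hx
        apply hne
        funext j
        have h1 := hx j.1 j.2
        simpa [hbb, j.2, eq_comm] using h1
      rw [Set.indicator_of_notMem hx]
    · intro h; exact absurd (Finset.mem_univ _) h
  calc ∫ x, ∏ j ∈ s, φ j (x j) ∂μ
      = ∫ x, ∑ ε : {j // j ∈ s} → Bool, Set.indicator (A ε) (fun _ => c ε) x ∂μ :=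
        integral_congr_ae (Filter.Eventually.of_forall hpt)
    _ = ∑ ε : {j // j ∈ s} → Bool, ∫ x, Set.indicator (A ε) (fun _ => c ε) x ∂μ := by
        apply integral_finset_sum
        intro ε _
        exact (integrable_const (c ε)).indicator (hAmeas ε)
    _ = ∑ ε : {j // j ∈ s} → Bool, (μ (A ε)).toReal • c ε := by
        refine Finset.sum_congr rfl fun ε _ => ?_
        exact integral_indicator_const (c ε) (hAmeas ε)
    _ = ∑ ε : {j // j ∈ s} → Bool, ((1:ℝ)/2)^s.card * c ε := by
        refine Finset.sum_congr rfl fun ε _ => ?_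
        rw [hA]
        rw [hμ s (bb ε)]
        simp [smul_eq_mul, ENNReal.toReal_pow]
    _ = ((1:ℝ)/2)^s.card * ∑ ε : {j // j ∈ s} → Bool, c ε := by
        rw [Finset.mul_sum]
    _ = ∏ j ∈ s, ((φ j false + φ j true) / 2) := by
        have h1 : ∑ ε : {j // j ∈ s} → Bool, c ε
            = ∏ j : {j // j ∈ s}, (φ j false + φ j true) := by
          have h2 := Finset.prod_univ_sum (fun _ : {j // j ∈ s} => (Finset.univ : Finset Bool))
            (fun j b => φ j b)
          rw [Fintype.piFinset_univ] at h2
          rw [hc]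
          rw [← h2]
          refine Finset.prod_congr rfl fun j _ => ?_
          simp [add_comm]
        rw [h1, ← Finset.prod_coe_sort s (fun j => (φ j false + φ j true) / 2),
          Finset.prod_div_distrib, Finset.prod_const, Finset.card_univ, Fintype.card_coe,
          one_div, inv_pow, inv_mul_eq_div]

lemma summable_coord (x : ℤ → Bool) {t : ℤ → ℝ} (ht : Summable t) :
    Summable fun j => (if x j then (1:ℝ) else 0) * t j := by
  apply Summable.of_abs
  apply Summable.of_nonneg_of_le (fun j => abs_nonneg _) (fun j => ?_) ht.abs
  by_cases h : x j <;> simp [h, abs_nonneg]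

lemma tendsto_Icc : Tendsto (fun N : ℕ => Finset.Icc (-(N:ℤ)) N) atTop atTop := by
  apply tendsto_atTop_finset_of_monotone
  · intro M N h
    apply Finset.Icc_subset_Icc
    · simp only [neg_le_neg_iff, Int.ofNat_le]; exact_mod_cast h
    · exact_mod_cast h
  · intro j
    refine ⟨j.natAbs, ?_⟩
    simp only [Finset.mem_Icc]
    omega

lemma summable_log_term {t : ℤ → ℝ} (ht : Summable t) (ht0 : ∀ j, t j ≤ 0) :
    Summable fun j => Real.log ((1 + Real.exp (t j)) / 2) := by
  rw [← summable_neg_iff]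
  apply Summable.of_nonneg_of_le ?h1 ?h2 ht.neg
  · intro j
    rw [neg_nonneg]
    apply Real.log_nonpos (by positivity)
    have := Real.exp_le_one_iff.2 (ht0 j)
    linarith
  · intro j
    rw [neg_le_neg_iff]
    calc t j = Real.log (Real.exp (t j)) := (Real.log_exp _).symm
      _ ≤ Real.log ((1 + Real.exp (t j)) / 2) := by
          apply Real.log_le_log (Real.exp_pos _)
          have := Real.exp_le_one_iff.2 (ht0 j)
          linarith

lemma integral_exp_tsum (μ : Measure (ℤ → Bool)) [IsProbabilityMeasure μ]
    (hμ : ∀ (s : Finset ℤ) (b : ℤ → Bool),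
      μ {x | ∀ i ∈ s, x i = b i} = (1 / 2 : ENNReal) ^ s.card)
    {t : ℤ → ℝ} (ht : Summable t) (ht0 : ∀ j, t j ≤ 0) :
    ∫ x, Real.exp (∑' j, (if x j then (1:ℝ) else 0) * t j) ∂μ
      = Real.exp (∑' j, Real.log ((1 + Real.exp (t j)) / 2)) := by
  classical
  set F : ℕ → (ℤ → Bool) → ℝ :=
    fun N x => ∏ j ∈ Finset.Icc (-(N:ℤ)) N, (if x j then Real.exp (t j) else 1) with hF
  have hFeq : ∀ N x, F N x
      = Real.exp (∑ j ∈ Finset.Icc (-(N:ℤ)) N, (if x j then (1:ℝ) else 0) * t j) := by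
    intro N x
    rw [Real.exp_sum]
    refine Finset.prod_congr rfl fun j _ => ?_
    by_cases h : x j <;> simp [h]
  have hFmeas : ∀ N, AEStronglyMeasurable (F N) μ := by
    intro N
    apply Measurable.aestronglyMeasurable
    apply Finset.measurable_prod
    intro j _
    have hb : Measurable fun b : Bool => (if b then Real.exp (t j) else (1:ℝ)) :=
      measurable_from_top
    exact hb.comp (measurable_pi_apply j)
  have hbound : ∀ N, ∀ᵐ x ∂μ, ‖F N x‖ ≤ (1:ℝ) := by
    intro N
    filter_upwards with x
    have h0 : 0 ≤ F N x := by
      apply Finset.prod_nonneg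
      intro j _
      by_cases h : x j <;> simp [h, (Real.exp_pos _).le]
    have h1 : F N x ≤ 1 := by
      apply Finset.prod_le_one
      · intro j _
        by_cases h : x j <;> simp [h, (Real.exp_pos _).le]
      · intro j _
        by_cases h : x j <;> simp [h, Real.exp_le_one_iff.2 (ht0 j)]
    rw [Real.norm_of_nonneg h0]
    exact h1
  have hlim : ∀ᵐ x ∂μ, Tendsto (fun N => F N x) atTop
      (𝓝 (Real.exp (∑' j, (if x j then (1:ℝ) else 0) * t j))) := by
    filter_upwards with x
    have hsum := summable_coord x ht
    have h1 : Tendsto (fun N : ℕ => ∑ j ∈ Finset.Icc (-(N:ℤ)) N,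
        (if x j then (1:ℝ) else 0) * t j) atTop
        (𝓝 (∑' j, (if x j then (1:ℝ) else 0) * t j)) :=
      hsum.hasSum.comp tendsto_Icc
    have h2 := (Real.continuous_exp.tendsto _).comp h1
    refine h2.congr fun N => ?_
    exact (hFeq N x).symm
  have key := tendsto_integral_of_dominated_convergence (fun _ => (1:ℝ))
    hFmeas (integrable_const 1) hbound hlim
  have hFN : ∀ N, ∫ x, F N x ∂μ
      = ∏ j ∈ Finset.Icc (-(N:ℤ)) N, ((1 + Real.exp (t j)) / 2) := by
    intro N
    have h := integral_prod_coord μ hμ (Finset.Icc (-(N:ℤ)) N)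
      (fun j b => if b then Real.exp (t j) else 1)
    simpa using h
  have hL := summable_log_term ht ht0
  have hProd : HasProd (fun j => (1 + Real.exp (t j)) / 2)
      (Real.exp (∑' j, Real.log ((1 + Real.exp (t j)) / 2))) := by
    have h := hasProd_exp hL.hasSum
    have hfun : (fun j => Real.exp (Real.log ((1 + Real.exp (t j)) / 2)))
        = fun j => (1 + Real.exp (t j)) / 2 := by
      funext j; rw [Real.exp_log (by positivity)]
    rwa [hfun] at h
  have h2 : Tendsto (fun N : ℕ => ∏ j ∈ Finset.Icc (-(N:ℤ)) N, ((1 + Real.exp (t j)) / 2))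
      atTop (𝓝 (Real.exp (∑' j, Real.log ((1 + Real.exp (t j)) / 2)))) :=
    hProd.comp tendsto_Icc
  have h3 : Tendsto (fun N => ∫ x, F N x ∂μ) atTop
      (𝓝 (Real.exp (∑' j, Real.log ((1 + Real.exp (t j)) / 2)))) :=
    h2.congr fun N => (hFN N).symm
  exact tendsto_nhds_unique key h3

lemma summable_w {n : ℕ} (hn : 0 < n) :
    Summable fun j : ℤ => Real.exp (-|(j : ℝ)| / n) := by
  have hr : Real.exp (-(1:ℝ)/n) < 1 := by
    rw [Real.exp_lt_one_iff]
    have h : (0:ℝ) < n := by exact_mod_cast hn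
    exact div_neg_of_neg_of_pos (by norm_num) h
  have h1 : Summable (fun k : ℕ => Real.exp (-(1:ℝ)/n) ^ k) :=
    summable_geometric_of_lt_one (Real.exp_nonneg _) hr
  have key : ∀ k : ℕ, Real.exp (-(1:ℝ)/n) ^ k = Real.exp (-(k:ℝ)/n) := by
    intro k
    rw [← Real.exp_nat_mul]
    congr 1
    ring
  apply Summable.of_nat_of_neg
  · refine h1.congr fun k => ?_
    rw [key k]
    congr 2
    push_cast
    rw [abs_of_nonneg (by positivity)]
  · refine h1.congr fun k => ?_
    rw [key k]
    congr 2
    push_cast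
    rw [abs_neg, abs_of_nonneg (by positivity)]

lemma measurable_tsum_coord {t : ℤ → ℝ} (ht : Summable t) :
    Measurable fun x : ℤ → Bool => ∑' j, (if x j then (1:ℝ) else 0) * t j := by
  apply measurable_of_tendsto_metrizable' (atTop : Filter ℕ)
    (f := fun (N : ℕ) (x : ℤ → Bool) => ∑ j ∈ Finset.Icc (-(N:ℤ)) N,
      (if x j then (1:ℝ) else 0) * t j)
  · intro N
    apply Finset.measurable_sum
    intro j _
    have hb : Measurable fun b : Bool => (if b then (1:ℝ) else 0) * t j :=
      measurable_from_top
    exact hb.comp (measurable_pi_apply j)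
  · rw [tendsto_pi_nhds]
    intro x
    exact (summable_coord x ht).hasSum.comp tendsto_Icc

lemma eLpNorm_two_sq (μ : Measure (ℤ → Bool)) [IsProbabilityMeasure μ]
    {F : (ℤ → Bool) → ℝ} (hm : Measurable F) (h0 : ∀ x, 0 ≤ F x) :
    ((eLpNorm F 2 μ).toReal) ^ 2 = ∫ x, F x * F x ∂μ := by
  rw [eLpNorm_eq_lintegral_rpow_enorm_toReal two_ne_zero ENNReal.ofNat_ne_top]
  simp only [ENNReal.toReal_ofNat]
  rw [← ENNReal.toReal_rpow, ← Real.rpow_natCast _ 2, ← Real.rpow_mul ENNReal.toReal_nonneg]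
  norm_num
  rw [integral_eq_lintegral_of_nonneg_ae
    (Filter.Eventually.of_forall fun x => mul_nonneg (h0 x) (h0 x))
    ((hm.mul hm).aestronglyMeasurable)]
  congr 1
  apply lintegral_congr
  intro x
  rw [Real.enorm_eq_ofReal (h0 x), pow_two, ← ENNReal.ofReal_mul (h0 x)]

end Aux

lemma div_half_div_half (A B : ℝ) (hB : B ≠ 0) : (A/2)/(B/2) = A/B := by
  field_simp

theorem inner_ratio_eq_tprod
    (μ : Measure (ℤ → Bool)) [IsProbabilityMeasure μ]
    (hμ : ∀ (s : Finset ℤ) (b : ℤ → Bool),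
      μ {x | ∀ i ∈ s, x i = b i} = (1 / 2 : ENNReal) ^ s.card)
    (g : Equiv.Perm ℤ) (hg : ∃ c : ℝ, ∀ j : ℤ, |(g j : ℝ) - j| ≤ c)
    (n : ℕ) (hn : 0 < n) :
    (∫ x, f n (fun j => x (g j)) * f n x ∂μ) / ((eLpNorm (f n) 2 μ).toReal) ^ 2
      = ∏' j : ℤ, (1 + a n j * a n (g j)) / (1 + a n j ^ 2) := by
  classical
  have hws : Summable fun j : ℤ => Real.exp (-|(j : ℝ)| / n) := summable_w hn
  set w : ℤ → ℝ := fun j => Real.exp (-|(j : ℝ)| / n) with hw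
  set t0 : ℤ → ℝ := fun j => -(n:ℝ) * w j with ht0def
  have ht0s : Summable t0 := hws.mul_left _
  have ht0le : ∀ j, t0 j ≤ 0 := by
    intro j
    have h1 : (0:ℝ) ≤ (n:ℝ) * w j := by positivity
    simp only [ht0def]
    nlinarith
  have ha : ∀ j, Real.exp (t0 j) = a n j := fun j => rfl
  have hap : ∀ k, 0 < a n k := fun k => Real.exp_pos _
  have hf_eq : ∀ y : ℤ → Bool,
      f n y = Real.exp (∑' j, (if y j then (1:ℝ) else 0) * t0 j) := by
    intro y
    show Real.exp _ = _
    congr 1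
    rw [← tsum_mul_left]
    exact tsum_congr fun j => by simp only [ht0def]; ring
  set t1 : ℤ → ℝ := fun j => t0 (g.symm j) + t0 j with ht1def
  have ht0s' : Summable fun j => t0 (g.symm j) := ht0s.comp_injective g.symm.injective
  have ht1s : Summable t1 := ht0s'.add ht0s
  have ht1le : ∀ j, t1 j ≤ 0 := fun j => add_nonpos (ht0le _) (ht0le _)
  have hnum_pt : ∀ x : ℤ → Bool, f n (fun j => x (g j)) * f n x
      = Real.exp (∑' j, (if x j then (1:ℝ) else 0) * t1 j) := by
    intro x
    rw [hf_eq, hf_eq, ← Real.exp_add]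
    congr 1
    have e1 : ∑' j, (if x (g j) then (1:ℝ) else 0) * t0 j
        = ∑' j, (if x j then (1:ℝ) else 0) * t0 (g.symm j) := by
      rw [← (g : ℤ ≃ ℤ).tsum_eq (fun j => (if x j then (1:ℝ) else 0) * t0 (g.symm j))]
      exact tsum_congr fun j => by rw [Equiv.symm_apply_apply]
    rw [e1, ← Summable.tsum_add (summable_coord x ht0s') (summable_coord x ht0s)]
    exact tsum_congr fun j => by simp only [ht1def]; ring
  have hnum : ∫ x, f n (fun j => x (g j)) * f n x ∂μ
      = Real.exp (∑' j, Real.log ((1 + Real.exp (t1 j)) / 2)) := by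
    rw [integral_congr_ae (Filter.Eventually.of_forall hnum_pt)]
    exact integral_exp_tsum μ hμ ht1s ht1le
  set t2 : ℤ → ℝ := fun j => t0 j + t0 j with ht2def
  have ht2s : Summable t2 := ht0s.add ht0s
  have ht2le : ∀ j, t2 j ≤ 0 := fun j => add_nonpos (ht0le j) (ht0le j)
  have hden_pt : ∀ x : ℤ → Bool, f n x * f n x
      = Real.exp (∑' j, (if x j then (1:ℝ) else 0) * t2 j) := by
    intro x
    rw [hf_eq, ← Real.exp_add]
    congr 1
    rw [← Summable.tsum_add (summable_coord x ht0s) (summable_coord x ht0s)]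
    exact tsum_congr fun j => by simp only [ht2def]; ring
  have hfmeas : Measurable (f n) := by
    unfold f
    exact Real.measurable_exp.comp ((measurable_tsum_coord hws).const_mul _)
  have hf0 : ∀ x, 0 ≤ f n x := fun x => (Real.exp_pos _).le
  have hden : ((eLpNorm (f n) 2 μ).toReal)^2
      = Real.exp (∑' j, Real.log ((1 + Real.exp (t2 j)) / 2)) := by
    rw [eLpNorm_two_sq μ hfmeas hf0]
    rw [integral_congr_ae (Filter.Eventually.of_forall hden_pt)]
    exact integral_exp_tsum μ hμ ht2s ht2le
  set u : ℤ → ℝ := fun j => Real.log ((1 + a n j * a n (g j)) / 2) with hu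
  set v : ℤ → ℝ := fun j => Real.log ((1 + a n j ^ 2) / 2) with hv
  have hL1u : ∀ j, Real.log ((1 + Real.exp (t1 j)) / 2) = u (g.symm j) := by
    intro j
    simp only [hu, ht1def]
    rw [Real.exp_add, ha, ha, Equiv.apply_symm_apply]
  have hL2v : ∀ j, Real.log ((1 + Real.exp (t2 j)) / 2) = v j := by
    intro j
    simp only [hv, ht2def]
    rw [Real.exp_add, ha, ← sq]
  have hsum1 : Summable fun j => u (g.symm j) :=
    (summable_log_term ht1s ht1le).congr hL1u
  have hu_s : Summable u := (Equiv.summable_iff (g.symm : ℤ ≃ ℤ)).1 hsum1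
  have hv_s : Summable v := (summable_log_term ht2s ht2le).congr hL2v
  have htsum1 : ∑' j, Real.log ((1 + Real.exp (t1 j)) / 2) = ∑' j, u j := by
    rw [tsum_congr hL1u]
    exact (g.symm : ℤ ≃ ℤ).tsum_eq u
  have htsum2 : ∑' j, Real.log ((1 + Real.exp (t2 j)) / 2) = ∑' j, v j := tsum_congr hL2v
  have hRHS : HasProd (fun j => (1 + a n j * a n (g j)) / (1 + a n j ^ 2))
      (Real.exp (∑' j, u j - ∑' j, v j)) := by
    have h := hasProd_exp (hu_s.hasSum.sub hv_s.hasSum)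
    have hfun : (fun j => Real.exp (u j - v j))
        = fun j => (1 + a n j * a n (g j)) / (1 + a n j ^ 2) := by
      funext j
      have h1 : (0:ℝ) < (1 + a n j * a n (g j)) / 2 := by
        have := mul_pos (hap j) (hap (g j)); linarith
      have h2 : (0:ℝ) < (1 + a n j ^ 2) / 2 := by
        have := sq_nonneg (a n j); linarith
      have h3 : (1 + a n j ^ 2) ≠ 0 := by nlinarith [sq_nonneg (a n j)]
      rw [Real.exp_sub]
      simp only [hu, hv]
      rw [Real.exp_log h1, Real.exp_log h2, div_half_div_half _ _ h3]
    rwa [hfun] at h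
  rw [hnum, hden, htsum1, htsum2, ← Real.exp_sub, hRHS.tprod_eq]
end

section
/- Let H be a group acting on a set Y such that there exists an H-invariant mean on Y and the stabiliser in H of every point y ∈ Y is an amenable group. Then H is amenable. -/
/-!
Fix a representative `r y` of each orbit and `σ y` with `σ y • r y = y`. Pushing the invariant
mean of `Stab (r y)` forward to the coset `σ y • Stab (r y)` gives a mean `ν y` on `G` which
depends only on the coset, hence `ν (g • y) = g • ν y`. Averaging `y ↦ ν y A` against the
invariant mean on `Y` gives an invariant mean on `G`.

The average is an integral against a finitely additive mean, defined as the limit of lower Riemann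
sums. These are layer-cake sums of the `ℕ`-valued functions `⌊n f⌋`, which are exactly additive,
so the lower sums are additive up to `1/n` and the integral is additive.
-/

/-- A finitely additive invariant probability mean on a `G`-set `Y`. -/
structure InvariantMean (G : Type*) [Group G] (Y : Type*) [MulAction G Y] where
  m : Set Y → ℝ
  nonneg : ∀ A : Set Y, 0 ≤ m A
  total : m Set.univ = 1
  add_disjoint : ∀ A B : Set Y, Disjoint A B → m (A ∪ B) = m A + m B
  invariant : ∀ (g : G) (A : Set Y), m ((g • ·) '' A) = m A

/-- A group is amenable if it admits an invariant mean for its left translation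
action on itself. -/
def Amenable (G : Type*) [Group G] : Prop :=
  Nonempty (InvariantMean G G)

lemma Nat.floor_mul_le_of_le_one {x : ℝ} (hx : x ≤ 1) (n : ℕ) : ⌊n * x⌋₊ ≤ n :=
  Nat.floor_le_of_le (mul_le_of_le_one_right n.cast_nonneg hx)

lemma le_of_forall_le_add_div_succ {a b c : ℝ} (h : ∀ n : ℕ, a ≤ b + c / (n + 1)) : a ≤ b := by
  have hlim : Filter.Tendsto (fun n : ℕ => b + c / (n + 1)) Filter.atTop (nhds b) := by
    simpa [div_eq_mul_one_div c] using
      tendsto_const_nhds.add (tendsto_one_div_add_atTop_nhds_zero_nat.const_mul c)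
  exact ge_of_tendsto' hlim h

@[ext]
structure Mean (Y : Type*) where
  m : Set Y → ℝ
  nonneg : ∀ A : Set Y, 0 ≤ m A
  total : m Set.univ = 1
  add_disjoint : ∀ A B : Set Y, Disjoint A B → m (A ∪ B) = m A + m B

namespace Mean

variable {X Y : Type*} (μ : Mean Y)

lemma m_empty : μ.m ∅ = 0 := by
  have := μ.add_disjoint ∅ ∅ disjoint_bot_left
  simp only [Set.union_empty] at this
  linarith

lemma m_mono {A B : Set Y} (h : A ⊆ B) : μ.m A ≤ μ.m B := by
  rw [← Set.union_sdiff_cancel h, μ.add_disjoint _ _ Set.disjoint_sdiff_right]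
  linarith [μ.nonneg (B \ A)]

lemma m_le_one (A : Set Y) : μ.m A ≤ 1 :=
  μ.total ▸ μ.m_mono (Set.subset_univ A)

def map (μ : Mean X) (f : X → Y) : Mean Y where
  m A := μ.m (f ⁻¹' A)
  nonneg _ := μ.nonneg _
  total := μ.total
  add_disjoint _ _ h := μ.add_disjoint _ _ (h.preimage f)

/-- Layer-cake sum `∑_{k < B} μ {k < u}`; it is the integral of `u` when `u ≤ B`. -/
def integralNat (u : Y → ℕ) (B : ℕ) : ℝ :=
  ∑ k ∈ Finset.range B, μ.m {y | k < u y}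

lemma integralNat_nonneg (u : Y → ℕ) (B : ℕ) : 0 ≤ μ.integralNat u B :=
  Finset.sum_nonneg fun _ _ => μ.nonneg _

lemma integralNat_mono {u v : Y → ℕ} (h : ∀ y, u y ≤ v y) (B : ℕ) :
    μ.integralNat u B ≤ μ.integralNat v B :=
  Finset.sum_le_sum fun _ _ => μ.m_mono fun y hy => lt_of_lt_of_le hy (h y)

lemma integralNat_of_le {u : Y → ℕ} {B B' : ℕ} (hu : ∀ y, u y ≤ B) (h : B ≤ B') :
    μ.integralNat u B' = μ.integralNat u B := by
  rw [integralNat, ← Finset.sum_range_add_sum_Ico _ h, Finset.sum_eq_zero (s := Finset.Ico B B'),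
    add_zero, integralNat]
  intro k hk
  have hempty : {y | k < u y} = ∅ :=
    Set.eq_empty_of_forall_notMem fun y hy => (hy.trans_le (hu y)).not_ge (Finset.mem_Ico.mp hk).1
  rw [hempty, μ.m_empty]

lemma integralNat_const (c : ℕ) : μ.integralNat (fun _ => c) c = c := by
  have hlevel : ∀ k ∈ Finset.range c, μ.m {_y : Y | k < c} = 1 := fun k hk => by
    simp only [Finset.mem_range.mp hk, Set.ofPred_true, μ.total]
  simp [integralNat, Finset.sum_congr rfl hlevel]

lemma integralNat_add_indicator {w : Y → ℕ} {B : ℕ} (hw : ∀ y, w y ≤ B) (S : Set Y) :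
    μ.integralNat (fun y => w y + S.indicator 1 y) (B + 1) = μ.integralNat w B + μ.m S := by
  -- `μ ({w = k} ∩ S) = f k - f (k + 1)` telescopes to `μ S`
  set f : ℕ → ℝ := fun k => μ.m ({y | k ≤ w y} ∩ S)
  have hlevel : ∀ k,
      μ.m {y | k < w y + S.indicator 1 y} = μ.m {y | k < w y} + (f k - f (k + 1)) := by
    intro k
    have h1 : {y | k < w y + S.indicator 1 y} = {y | k < w y} ∪ ({y | w y = k} ∩ S) := by
      ext y
      by_cases hy : y ∈ S
      · simp only [Set.mem_ofPred_eq, Set.mem_union, Set.mem_inter_iff, hy, Set.indicator_of_mem,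
          Pi.one_apply, and_true]
        omega
      · simp [hy]
    have h2 : {y | k ≤ w y} ∩ S = ({y | w y = k} ∩ S) ∪ ({y | k + 1 ≤ w y} ∩ S) := by
      ext y; simp only [Set.mem_inter_iff, Set.mem_union, Set.mem_ofPred_eq]; grind
    have hd1 : Disjoint {y | k < w y} ({y | w y = k} ∩ S) :=
      Set.disjoint_left.mpr fun y hy hy' => by simp_all
    have hd2 : Disjoint ({y | w y = k} ∩ S) ({y | k + 1 ≤ w y} ∩ S) :=
      Set.disjoint_left.mpr fun y hy hy' => by simp_all
    simp only [f, h1, h2, μ.add_disjoint _ _ hd1, μ.add_disjoint _ _ hd2]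
    ring
  have hf0 : f 0 = μ.m S := by simp [f]
  have hfB : f (B + 1) = 0 := by
    have : {y | B + 1 ≤ w y} ∩ S = ∅ :=
      Set.eq_empty_of_forall_notMem fun y hy => by have := hw y; have : B + 1 ≤ w y := hy.1; omega
    simp only [f, this, μ.m_empty]
  rw [integralNat, Finset.sum_congr rfl fun k _ => hlevel k, Finset.sum_add_distrib,
    Finset.sum_range_sub', hf0, hfB, sub_zero, ← integralNat, μ.integralNat_of_le hw (by omega)]

lemma integralNat_add {u v : Y → ℕ} {B C : ℕ} (hu : ∀ y, u y ≤ B) (hv : ∀ y, v y ≤ C) :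
    μ.integralNat (fun y => u y + v y) (B + C) = μ.integralNat u B + μ.integralNat v C := by
  induction C generalizing v with
  | zero =>
    simp [integralNat, fun y => Nat.le_zero.mp (hv y)]
  | succ C ih =>
    set v' : Y → ℕ := fun y => min (v y) C
    have hv' : ∀ y, v' y ≤ C := fun y => min_le_right _ _
    have hsplit : ∀ y, v y = v' y + Set.indicator {y | C < v y} 1 y := by
      intro y
      by_cases h : C < v y
      · simp [v', le_antisymm (hv y) h]
      · simp [v', h, Nat.min_eq_left (not_lt.mp h)]
    have hv_eq : μ.integralNat v (C + 1) = μ.integralNat v' C + μ.m {y | C < v y} := by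
      rw [← μ.integralNat_add_indicator hv']
      congr 1
      exact funext hsplit
    have huv_eq : μ.integralNat (fun y => u y + v y) (B + (C + 1)) =
        μ.integralNat (fun y => u y + v' y) (B + C) + μ.m {y | C < v y} := by
      rw [← μ.integralNat_add_indicator fun y => Nat.add_le_add (hu y) (hv' y)]
      rw [show B + (C + 1) = B + C + 1 by omega]
      congr 1
      funext y
      rw [hsplit y, add_assoc]
    rw [huv_eq, hv_eq, ih hv']
    ring

lemma integralNat_nsmul {u : Y → ℕ} {B : ℕ} (hu : ∀ y, u y ≤ B) (n : ℕ) :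
    μ.integralNat (fun y => n * u y) (n * B) = n * μ.integralNat u B := by
  induction n with
  | zero => simp [integralNat]
  | succ n ih =>
    simp only [Nat.succ_mul, μ.integralNat_add (fun y => Nat.mul_le_mul_left n (hu y)) hu, ih]
    push_cast
    ring

/-- `(1/n) ∑_{k=1}^n μ {f ≥ k/n}`, a lower Riemann sum for `∫ f dμ`. -/
noncomputable def lowerSum (f : Y → ℝ) (n : ℕ) : ℝ :=
  μ.integralNat (fun y => ⌊n * f y⌋₊) n / n

lemma lowerSum_nonneg (f : Y → ℝ) (n : ℕ) : 0 ≤ μ.lowerSum f n :=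
  div_nonneg (μ.integralNat_nonneg _ _) n.cast_nonneg

lemma lowerSum_le_lowerSum_add_inv {f : Y → ℝ} (hf0 : ∀ y, 0 ≤ f y) (hf1 : ∀ y, f y ≤ 1)
    {n k : ℕ} (hn : 0 < n) (hk : 0 < k) :
    μ.lowerSum f k ≤ μ.lowerSum f n + 1 / n := by
  have hpt : ∀ y, n * ⌊k * f y⌋₊ ≤ k * ⌊n * f y⌋₊ + k := by
    intro y
    have h1 : (⌊k * f y⌋₊ : ℝ) ≤ k * f y := Nat.floor_le (by have := hf0 y; positivity)
    have h2 : (n : ℝ) * f y < ⌊n * f y⌋₊ + 1 := Nat.lt_floor_add_one _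
    have : (n * ⌊k * f y⌋₊ : ℝ) ≤ k * ⌊n * f y⌋₊ + k := by
      calc (n : ℝ) * ⌊k * f y⌋₊ ≤ n * (k * f y) := by gcongr
        _ = k * (n * f y) := by ring
        _ ≤ k * (⌊n * f y⌋₊ + 1) := by gcongr
        _ = k * ⌊n * f y⌋₊ + k := by ring
    exact_mod_cast this
  have hbk : ∀ y, ⌊k * f y⌋₊ ≤ k := fun y => Nat.floor_mul_le_of_le_one (hf1 y) k
  have hbn : ∀ y, ⌊n * f y⌋₊ ≤ n := fun y => Nat.floor_mul_le_of_le_one (hf1 y) n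
  have hmono := μ.integralNat_mono hpt (n * k + k)
  rw [μ.integralNat_of_le (fun y => Nat.mul_le_mul_left n (hbk y)) (Nat.le_add_right _ _),
    μ.integralNat_nsmul hbk, mul_comm n k,
    μ.integralNat_add (fun y => Nat.mul_le_mul_left k (hbn y)) (fun _ => le_refl k),
    μ.integralNat_nsmul hbn, μ.integralNat_const] at hmono
  have hn' : (0 : ℝ) < n := by exact_mod_cast hn
  have hk' : (0 : ℝ) < k := by exact_mod_cast hk
  rw [lowerSum, lowerSum, ← add_div, div_le_div_iff₀ hk' hn']
  nlinarith

lemma lowerSum_add_lowerSum_le {f g : Y → ℝ} (hf0 : ∀ y, 0 ≤ f y) (hg0 : ∀ y, 0 ≤ g y)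
    (hfg1 : ∀ y, f y + g y ≤ 1) (n : ℕ) :
    μ.lowerSum f n + μ.lowerSum g n ≤ μ.lowerSum (fun y => f y + g y) n := by
  have hpt : ∀ y, ⌊n * f y⌋₊ + ⌊n * g y⌋₊ ≤ ⌊n * (f y + g y)⌋₊ := by
    intro y
    apply Nat.le_floor
    have h1 : (⌊n * f y⌋₊ : ℝ) ≤ n * f y := Nat.floor_le (by have := hf0 y; positivity)
    have h2 : (⌊n * g y⌋₊ : ℝ) ≤ n * g y := Nat.floor_le (by have := hg0 y; positivity)
    push_cast
    linarith
  have hfg : ∀ y, ⌊n * (f y + g y)⌋₊ ≤ n := fun y => Nat.floor_mul_le_of_le_one (hfg1 y) n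
  have hmono := μ.integralNat_mono hpt n
  rw [← μ.integralNat_of_le (fun y => (hpt y).trans (hfg y)) (Nat.le_add_right n n),
    μ.integralNat_add (fun y => Nat.floor_mul_le_of_le_one (by linarith [hfg1 y, hg0 y]) n)
      (fun y => Nat.floor_mul_le_of_le_one (by linarith [hfg1 y, hf0 y]) n)] at hmono
  rw [lowerSum, lowerSum, lowerSum, ← add_div]
  exact div_le_div_of_nonneg_right hmono n.cast_nonneg

lemma lowerSum_add_le {f g : Y → ℝ} (hf0 : ∀ y, 0 ≤ f y) (hg0 : ∀ y, 0 ≤ g y)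
    (hfg1 : ∀ y, f y + g y ≤ 1) {n : ℕ} (hn : 0 < n) :
    μ.lowerSum (fun y => f y + g y) n ≤ μ.lowerSum f n + μ.lowerSum g n + 1 / n := by
  have hpt : ∀ y, ⌊n * (f y + g y)⌋₊ ≤ ⌊n * f y⌋₊ + ⌊n * g y⌋₊ + 1 := by
    intro y
    rw [← Nat.lt_succ_iff, Nat.floor_lt (by have := hf0 y; have := hg0 y; positivity)]
    have h1 : (n : ℝ) * f y < ⌊n * f y⌋₊ + 1 := Nat.lt_floor_add_one _
    have h2 : (n : ℝ) * g y < ⌊n * g y⌋₊ + 1 := Nat.lt_floor_add_one _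
    push_cast
    linarith
  have hbf : ∀ y, ⌊n * f y⌋₊ ≤ n := fun y =>
    Nat.floor_mul_le_of_le_one (by linarith [hfg1 y, hg0 y]) n
  have hbg : ∀ y, ⌊n * g y⌋₊ ≤ n := fun y =>
    Nat.floor_mul_le_of_le_one (by linarith [hfg1 y, hf0 y]) n
  have hmono := μ.integralNat_mono hpt (n + n + 1)
  rw [μ.integralNat_of_le (fun y => Nat.floor_mul_le_of_le_one (hfg1 y) n) (by omega),
    μ.integralNat_add (fun y => Nat.add_le_add (hbf y) (hbg y)) (fun _ => le_refl 1),
    μ.integralNat_add hbf hbg, μ.integralNat_const] at hmono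
  have hn' : (0 : ℝ) < n := by exact_mod_cast hn
  rw [lowerSum, lowerSum, lowerSum, ← add_div, ← add_div, div_le_div_iff_of_pos_right hn']
  exact_mod_cast hmono

/-- Meaningful for `[0, 1]`-valued `f`, where it is the limit of the lower sums. -/
noncomputable def integral (f : Y → ℝ) : ℝ :=
  ⨆ n : ℕ, μ.lowerSum f (n + 1)

lemma lowerSum_le_integral {f : Y → ℝ} (hf0 : ∀ y, 0 ≤ f y) (hf1 : ∀ y, f y ≤ 1) (n : ℕ) :
    μ.lowerSum f (n + 1) ≤ μ.integral f :=
  le_ciSup ⟨μ.lowerSum f 1 + 1, by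
    rintro _ ⟨k, rfl⟩
    simpa using μ.lowerSum_le_lowerSum_add_inv hf0 hf1 one_pos k.succ_pos⟩ n

lemma integral_le_lowerSum_add {f : Y → ℝ} (hf0 : ∀ y, 0 ≤ f y) (hf1 : ∀ y, f y ≤ 1) (n : ℕ) :
    μ.integral f ≤ μ.lowerSum f (n + 1) + 1 / (n + 1) :=
  ciSup_le fun k => by exact_mod_cast μ.lowerSum_le_lowerSum_add_inv hf0 hf1 n.succ_pos k.succ_pos

lemma integral_nonneg {f : Y → ℝ} (hf0 : ∀ y, 0 ≤ f y) (hf1 : ∀ y, f y ≤ 1) :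
    0 ≤ μ.integral f :=
  (μ.lowerSum_nonneg f 1).trans (μ.lowerSum_le_integral hf0 hf1 0)

lemma integral_one : μ.integral (fun _ => 1) = 1 := by
  have hsum : ∀ n : ℕ, μ.lowerSum (fun _ => 1) (n + 1) = 1 := fun n => by
    simp only [lowerSum, mul_one, Nat.floor_natCast, integralNat_const]
    exact div_self (by positivity)
  simp only [integral, hsum, ciSup_const]

lemma integral_add {f g : Y → ℝ} (hf0 : ∀ y, 0 ≤ f y) (hg0 : ∀ y, 0 ≤ g y)
    (hfg1 : ∀ y, f y + g y ≤ 1) :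
    μ.integral (fun y => f y + g y) = μ.integral f + μ.integral g := by
  have hf1 : ∀ y, f y ≤ 1 := fun y => by linarith [hfg1 y, hg0 y]
  have hg1 : ∀ y, g y ≤ 1 := fun y => by linarith [hfg1 y, hf0 y]
  have hfg0 : ∀ y, 0 ≤ f y + g y := fun y => add_nonneg (hf0 y) (hg0 y)
  apply le_antisymm <;> refine le_of_forall_le_add_div_succ (c := 2) fun n => ?_
  all_goals have htwo : (2 : ℝ) / (n + 1) = 1 / (n + 1) + 1 / (n + 1) := by ring
  · have hsum := μ.lowerSum_add_le hf0 hg0 hfg1 (Nat.zero_lt_succ n)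
    push_cast at hsum
    linarith [μ.integral_le_lowerSum_add hfg0 hfg1 n,
      μ.lowerSum_le_integral hf0 hf1 n, μ.lowerSum_le_integral hg0 hg1 n]
  · linarith [μ.integral_le_lowerSum_add hf0 hf1 n, μ.integral_le_lowerSum_add hg0 hg1 n,
      μ.lowerSum_add_lowerSum_le hf0 hg0 hfg1 (n + 1), μ.lowerSum_le_integral hfg0 hfg1 n]

/-- The analogue of `MeasureTheory.Measure.bind`. -/
noncomputable def bind (μ : Mean Y) (ν : Y → Mean X) : Mean X where
  m A := μ.integral fun y => (ν y).m A
  nonneg A := μ.integral_nonneg (fun y => (ν y).nonneg A) (fun y => (ν y).m_le_one A)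
  total := by simpa only [Mean.total] using μ.integral_one
  add_disjoint A B h := by
    simp only [(ν _).add_disjoint A B h]
    exact μ.integral_add (fun y => (ν y).nonneg A) (fun y => (ν y).nonneg B)
      (fun y => (ν y).add_disjoint A B h ▸ (ν y).m_le_one _)

lemma bind_map {Z : Type*} (μ : Mean Y) (ν : Y → Mean X) (f : X → Z) :
    (μ.bind ν).map f = μ.bind fun y => (ν y).map f :=
  rfl

lemma map_bind {Z : Type*} (μ : Mean Z) (e : Z → Y) (ν : Y → Mean X) :
    (μ.map e).bind ν = μ.bind (ν ∘ e) :=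
  rfl

end Mean

namespace InvariantMean

open scoped Pointwise

variable {G : Type*} [Group G] {Y : Type*} [MulAction G Y]

def toMean (μ : InvariantMean G Y) : Mean Y :=
  ⟨μ.m, μ.nonneg, μ.total, μ.add_disjoint⟩

lemma toMean_map_smul (μ : InvariantMean G Y) (g : G) : μ.toMean.map (g • ·) = μ.toMean := by
  ext A
  change μ.m ((g • ·) ⁻¹' A) = μ.m A
  rw [Set.preimage_smul, ← Set.image_smul, μ.invariant]

def ofMean (μ : Mean Y) (h : ∀ g : G, μ.map (g • ·) = μ) : InvariantMean G Y where
  __ := μ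
  invariant g A := by
    have hA := congrArg (Mean.m · ((g • ·) '' A)) (h g)
    simp only [Mean.map, Set.preimage_smul, Set.image_smul, inv_smul_smul] at hA ⊢
    exact hA.symm

lemma bind_invariant (μ : InvariantMean G Y) {X : Type*} [MulAction G X] (ν : Y → Mean X)
    (hν : ∀ (g : G) y, (ν y).map (g • ·) = ν (g • y)) (g : G) :
    (μ.toMean.bind ν).map (g • ·) = μ.toMean.bind ν := by
  calc (μ.toMean.bind ν).map (g • ·) = μ.toMean.bind (ν ∘ (g • ·)) := by
        rw [Mean.bind_map]
        simp only [hν]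
        rfl
    _ = (μ.toMean.map (g • ·)).bind ν := (Mean.map_bind _ _ _).symm
    _ = μ.toMean.bind ν := by rw [μ.toMean_map_smul]

def cosetMean {K : Subgroup G} (μ : InvariantMean K K) (x : G) : Mean G :=
  μ.toMean.map fun h => x * h

lemma cosetMean_mul_of_mem {K : Subgroup G} (μ : InvariantMean K K) (x : G) {c : G} (hc : c ∈ K) :
    μ.cosetMean (x * c) = μ.cosetMean x := by
  conv_rhs => rw [cosetMean, ← μ.toMean_map_smul ⟨c, hc⟩]
  ext A
  show μ.m _ = μ.m _
  congr 1
  ext h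
  simp [mul_assoc]

lemma cosetMean_map_smul {K : Subgroup G} (μ : InvariantMean K K) (g x : G) :
    (μ.cosetMean x).map (g • ·) = μ.cosetMean (g * x) := by
  ext A
  show μ.m _ = μ.m _
  congr 1
  ext h
  simp [mul_assoc]

end InvariantMean

namespace MulAction

variable (G : Type*) [Group G] {Y : Type*} [MulAction G Y]

lemma exists_orbit_transversal :
    ∃ (r : Y → Y) (σ : Y → G), (∀ (g : G) y, r (g • y) = r y) ∧ ∀ y, σ y • r y = y := by
  let r : Y → Y := fun y => (Quotient.mk (orbitRel G Y) y).out
  have hr : ∀ (g : G) y, r (g • y) = r y := fun g y =>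
    congrArg Quotient.out (Quotient.sound (orbitRel_apply.mpr (mem_orbit y g)))
  have hsec : ∀ y, ∃ g : G, g • r y = y := fun y => by
    obtain ⟨g, hg⟩ := orbitRel_apply.mp (Quotient.mk_out (s := orbitRel G Y) y)
    exact ⟨g⁻¹, by rw [show r y = g • y from hg.symm, inv_smul_smul]⟩
  choose σ hσ using hsec
  exact ⟨r, σ, hr, hσ⟩

variable {G}

/-- Send `y` to the coset mean on `σ y • Stab (r y)`, the set of group elements taking the orbit
representative `r y` to `y`; it does not depend on the choice of `σ y`. -/
lemma exists_equivariant_mean_family (h : ∀ y : Y, Amenable (stabilizer G y)) :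
    ∃ ν : Y → Mean G, ∀ (g : G) y, (ν y).map (g • ·) = ν (g • y) := by
  obtain ⟨r, σ, hr, hσ⟩ := exists_orbit_transversal G (Y := Y)
  have μ : ∀ z : Y, InvariantMean (stabilizer G z) (stabilizer G z) := fun z => (h z).some
  refine ⟨fun y => (μ (r y)).cosetMean (σ y), fun g y => ?_⟩
  have hc : (g * σ y)⁻¹ * σ (g • y) ∈ stabilizer G (r y) := by
    rw [mem_stabilizer_iff, mul_smul, ← hr g y, hσ, inv_smul_eq_iff, mul_smul, hr, hσ]
  dsimp only
  rw [hr g y, InvariantMean.cosetMean_map_smul, ← InvariantMean.cosetMean_mul_of_mem _ _ hc,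
    mul_inv_cancel_left]

end MulAction

theorem amenable_of_invariant_mean_of_amenable_stabilizers
    (G : Type*) [Group G] (Y : Type*) [MulAction G Y]
    (hmean : Nonempty (InvariantMean G Y))
    (hstab : ∀ y : Y, Amenable (MulAction.stabilizer G y)) :
    Amenable G := by
  obtain ⟨μ⟩ := hmean
  obtain ⟨ν, hν⟩ := MulAction.exists_equivariant_mean_family hstab
  exact ⟨InvariantMean.ofMean (μ.toMean.bind ν) (μ.bind_invariant ν hν)⟩
end

section
/- Let G be a group acting transitively on a set X and x₀ ∈ X. If the action of G on the set P_f(X) of finite subsets of X (by pushing sets forward) admits an invariant mean giving weight 1/2 to the collection of finite sets containing x₀, then it admits an invariant mean giving full weight (weight 1) to the collection of finite sets containing x₀. -/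
open Pointwise

/-!
An invariant mean integrates `[0, 1]`-valued functions (as the limit of its lower sums on finer
and finer grids), so two invariant means `M`, `N` on finite subsets of `X` combine into the
law of `E ∪ F` for independent samples `E ∼ M`, `F ∼ N`, which is again invariant. If `M`
misses `x₀` with probability `1/2`, the union of `k + 1` independent `M`-samples misses it
with probability at most `2⁻⁽ᵏ⁺¹⁾`, and an ultrafilter limit of these means misses it with
probability `0`.
-/

open Filter Topology Finset

/-- `gridIndex n t / n` is `t` rounded down to the grid `{0, 1/n, …, 1}`. -/
noncomputable def gridIndex (n : ℕ) (t : ℝ) : ℕ := min n ⌊n * t⌋₊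

theorem gridIndex_mem_range (n : ℕ) (t : ℝ) : gridIndex n t ∈ range (n + 1) :=
  mem_range.2 (Nat.lt_succ_of_le (min_le_left _ _))

theorem gridIndex_div_le_one (n : ℕ) (t : ℝ) : (gridIndex n t : ℝ) / n ≤ 1 :=
  div_le_one_of_le₀ (mod_cast min_le_left _ _) n.cast_nonneg

theorem gridIndex_div_le {t : ℝ} (ht : 0 ≤ t) (n : ℕ) : (gridIndex n t : ℝ) / n ≤ t := by
  rcases n.eq_zero_or_pos with rfl | hn
  · simpa using ht
  rw [div_le_iff₀ (mod_cast hn), mul_comm]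
  calc (gridIndex n t : ℝ) ≤ ⌊n * t⌋₊ := mod_cast min_le_right _ _
    _ ≤ n * t := Nat.floor_le (by positivity)

theorem le_gridIndex_div_add {n : ℕ} (hn : 0 < n) {t : ℝ} (ht : t ≤ 1) :
    t ≤ (gridIndex n t : ℝ) / n + 1 / n := by
  have hn' : (0 : ℝ) < n := mod_cast hn
  rw [← add_div, le_div_iff₀ hn']
  rcases le_total n ⌊n * t⌋₊ with h | h
  · rw [gridIndex, min_eq_left h]
    nlinarith
  · rw [gridIndex, min_eq_right h]
    linarith [Nat.lt_floor_add_one ((n : ℝ) * t)]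

namespace InvariantMean

section Basic

variable {G : Type*} [Group G] {Y : Type*} [MulAction G Y] (M : InvariantMean G Y)

theorem m_empty : M.m ∅ = 0 := by
  have h := M.add_disjoint ∅ ∅ (Set.disjoint_empty _)
  rw [Set.empty_union] at h
  linarith

theorem m_mono {A B : Set Y} (h : A ⊆ B) : M.m A ≤ M.m B := by
  have h' := M.add_disjoint A (B \ A) Set.disjoint_sdiff_right
  rw [Set.union_sdiff_cancel h] at h'
  linarith [M.nonneg (B \ A)]

theorem m_le_one (A : Set Y) : M.m A ≤ 1 :=
  M.total ▸ M.m_mono (Set.subset_univ A)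

theorem m_compl (A : Set Y) : M.m Aᶜ = 1 - M.m A := by
  have h := M.add_disjoint A Aᶜ disjoint_compl_right
  rw [Set.union_compl_self, M.total] at h
  linarith

theorem m_preimage_smul (g : G) (A : Set Y) : M.m ((g • ·) ⁻¹' A) = M.m A := by
  rw [Set.preimage_smul, ← Set.image_smul, M.invariant]

theorem m_biUnion {ι : Type*} {s : Finset ι} {D : ι → Set Y}
    (hD : (s : Set ι).PairwiseDisjoint D) : M.m (⋃ i ∈ s, D i) = ∑ i ∈ s, M.m (D i) := by
  classical
  induction s using Finset.induction_on with
  | empty => simpa using M.m_empty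
  | insert a s ha ih =>
    rw [coe_insert, Set.pairwiseDisjoint_insert_of_notMem (mod_cast ha)] at hD
    have hdisj : Disjoint (D a) (⋃ i ∈ s, D i) :=
      Set.disjoint_iUnion₂_right.2 fun j hj => hD.2 j hj
    rw [set_biUnion_insert, M.add_disjoint _ _ hdisj, ih hD.1, sum_insert ha]

theorem m_eq_sum_inter_fiber {α : Type*} {t : Finset α} {ψ : Y → α} (hψ : ∀ y, ψ y ∈ t)
    (B : Set Y) : M.m B = ∑ b ∈ t, M.m (B ∩ ψ ⁻¹' {b}) := by
  rw [← M.m_biUnion]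
  · congr 1
    ext y
    simpa using fun _ => hψ y
  · intro a _ b _ hab
    exact Disjoint.mono Set.inter_subset_right Set.inter_subset_right
      ((Set.disjoint_singleton.2 hab).preimage ψ)

end Basic

section Integral

variable {G : Type*} [Group G] {Y : Type*} [MulAction G Y] (M : InvariantMean G Y)
  {α β : Type*}

/-- The integral of `u ∘ φ` for a map `φ` with values in the finite set `s`. -/
def fiberSum (s : Finset α) (φ : Y → α) (u : α → ℝ) : ℝ :=
  ∑ a ∈ s, u a * M.m (φ ⁻¹' {a})

noncomputable def gridSum (n : ℕ) (f : Y → ℝ) : ℝ :=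
  M.fiberSum (range (n + 1)) (fun y => gridIndex n (f y)) (fun k => k / n)

/-- Meaningful for `[0, 1]`-valued `f` only: `gridIndex` caps values above `1`. -/
noncomputable def integral (f : Y → ℝ) : ℝ := ⨆ n, M.gridSum n f

variable {M}

theorem fiberSum_le_fiberSum {s : Finset α} {t : Finset β} {φ : Y → α} {ψ : Y → β}
    (hφ : ∀ y, φ y ∈ s) (hψ : ∀ y, ψ y ∈ t) {u : α → ℝ} {v : β → ℝ}
    (h : ∀ y, u (φ y) ≤ v (ψ y)) : M.fiberSum s φ u ≤ M.fiberSum t ψ v := by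
  calc M.fiberSum s φ u
      = ∑ a ∈ s, ∑ b ∈ t, u a * M.m (φ ⁻¹' {a} ∩ ψ ⁻¹' {b}) := by
        simp only [fiberSum, ← mul_sum, ← M.m_eq_sum_inter_fiber hψ]
    _ ≤ ∑ a ∈ s, ∑ b ∈ t, v b * M.m (φ ⁻¹' {a} ∩ ψ ⁻¹' {b}) := by
        refine sum_le_sum fun a _ => sum_le_sum fun b _ => ?_
        rcases (φ ⁻¹' {a} ∩ ψ ⁻¹' {b}).eq_empty_or_nonempty with hempty | ⟨y, rfl, rfl⟩
        · simp [hempty, M.m_empty]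
        · exact mul_le_mul_of_nonneg_right (h y) (M.nonneg _)
    _ = M.fiberSum t ψ v := by
        rw [sum_comm]
        simp only [fiberSum, ← mul_sum, M.m_eq_sum_inter_fiber hφ (ψ ⁻¹' _), Set.inter_comm]

theorem fiberSum_eq_fiberSum {s : Finset α} {t : Finset β} {φ : Y → α} {ψ : Y → β}
    (hφ : ∀ y, φ y ∈ s) (hψ : ∀ y, ψ y ∈ t) {u : α → ℝ} {v : β → ℝ}
    (h : ∀ y, u (φ y) = v (ψ y)) : M.fiberSum s φ u = M.fiberSum t ψ v :=
  (fiberSum_le_fiberSum hφ hψ fun y => (h y).le).antisymm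
    (fiberSum_le_fiberSum hψ hφ fun y => (h y).ge)

theorem fiberSum_add (s : Finset α) (φ : Y → α) (u v : α → ℝ) :
    M.fiberSum s φ (fun a => u a + v a) = M.fiberSum s φ u + M.fiberSum s φ v := by
  simp only [fiberSum, add_mul, sum_add_distrib]

theorem fiberSum_const {s : Finset α} {φ : Y → α} (hφ : ∀ y, φ y ∈ s) (c : ℝ) :
    M.fiberSum s φ (fun _ => c) = c := by
  have h := M.m_eq_sum_inter_fiber hφ Set.univ
  simp only [Set.univ_inter, M.total] at h
  rw [fiberSum, ← mul_sum, ← h, mul_one]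

theorem fiberSum_add_const {s : Finset α} {φ : Y → α} (hφ : ∀ y, φ y ∈ s) (u : α → ℝ)
    (c : ℝ) :
    M.fiberSum s φ (fun a => u a + c) = M.fiberSum s φ u + c := by
  rw [fiberSum_add, fiberSum_const hφ]

theorem fiberSum_comp_smul (s : Finset α) (φ : Y → α) (u : α → ℝ) (g : G) :
    M.fiberSum s (fun y => φ (g • y)) u = M.fiberSum s φ u := by
  simp only [fiberSum]
  exact sum_congr rfl fun a _ => congrArg (u a * ·) (M.m_preimage_smul g (φ ⁻¹' {a}))

theorem gridSum_nonneg (n : ℕ) (f : Y → ℝ) : 0 ≤ M.gridSum n f := by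
  unfold gridSum fiberSum
  exact sum_nonneg fun k _ =>
    mul_nonneg (div_nonneg (Nat.cast_nonneg k) n.cast_nonneg) (M.nonneg _)

theorem gridSum_le_one (n : ℕ) (f : Y → ℝ) : M.gridSum n f ≤ 1 := by
  calc M.gridSum n f ≤ M.fiberSum (range 1) (fun _ => 0) (fun _ => 1) :=
        fiberSum_le_fiberSum (fun _ => gridIndex_mem_range _ _) (fun _ => self_mem_range_succ 0)
          fun _ => gridIndex_div_le_one _ _
    _ = 1 := fiberSum_const (fun _ => self_mem_range_succ 0) 1

theorem gridSum_le_gridSum_add {f : Y → ℝ} (hf0 : ∀ y, 0 ≤ f y) (hf1 : ∀ y, f y ≤ 1) (m : ℕ)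
    {n : ℕ} (hn : 0 < n) : M.gridSum m f ≤ M.gridSum n f + 1 / n := by
  rw [gridSum, gridSum, ← fiberSum_add_const fun _ => gridIndex_mem_range _ _]
  exact fiberSum_le_fiberSum (fun _ => gridIndex_mem_range _ _)
    (fun _ => gridIndex_mem_range _ _)
    fun y => (gridIndex_div_le (hf0 y) m).trans (le_gridIndex_div_add hn (hf1 y))

theorem gridSum_comp_smul (n : ℕ) (f : Y → ℝ) (g : G) :
    M.gridSum n (fun y => f (g • y)) = M.gridSum n f :=
  fiberSum_comp_smul _ (fun y => gridIndex n (f y)) _ g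

/-- Rounding down to the grid loses less than `1/n` at each point. -/
theorem abs_gridSum_add_sub_le {f g : Y → ℝ} (hf0 : ∀ y, 0 ≤ f y) (hg0 : ∀ y, 0 ≤ g y)
    (hfg1 : ∀ y, f y + g y ≤ 1) {n : ℕ} (hn : 0 < n) :
    |M.gridSum n (fun y => f y + g y) - (M.gridSum n f + M.gridSum n g)| ≤ 2 / n := by
  have hf1 y : f y ≤ 1 := by linarith [hg0 y, hfg1 y]
  have hg1 y : g y ≤ 1 := by linarith [hf0 y, hfg1 y]
  have htwo : (2 : ℝ) / n = 1 / n + 1 / n := by ring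
  have hmem (φ : Y → ℝ) y : gridIndex n (φ y) ∈ range (n + 1) := gridIndex_mem_range _ _
  have hpair y : (gridIndex n (f y), gridIndex n (g y)) ∈ range (n + 1) ×ˢ range (n + 1) :=
    mem_product.2 ⟨hmem f y, hmem g y⟩
  set P := M.fiberSum (range (n + 1) ×ˢ range (n + 1))
    (fun y => (gridIndex n (f y), gridIndex n (g y))) (fun p => p.1 / n + p.2 / n) with hP
  have hsplit : M.gridSum n f + M.gridSum n g = P := by
    rw [hP, fiberSum_add, gridSum, gridSum,
      fiberSum_eq_fiberSum (hmem f) hpair (v := fun p : ℕ × ℕ => (p.1 : ℝ) / n) fun _ => rfl,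
      fiberSum_eq_fiberSum (hmem g) hpair (v := fun p : ℕ × ℕ => (p.2 : ℝ) / n) fun _ => rfl]
  have hupper : M.gridSum n (fun y => f y + g y) ≤ P + 2 / n := by
    rw [← fiberSum_add_const hpair]
    refine fiberSum_le_fiberSum (hmem _) hpair fun y => ?_
    dsimp only
    linarith [gridIndex_div_le (add_nonneg (hf0 y) (hg0 y)) n,
      le_gridIndex_div_add hn (hf1 y), le_gridIndex_div_add hn (hg1 y)]
  have hlower : P ≤ M.gridSum n (fun y => f y + g y) + 1 / n := by
    rw [gridSum, ← fiberSum_add_const (hmem _)]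
    refine fiberSum_le_fiberSum hpair (hmem _) fun y => ?_
    dsimp only
    linarith [gridIndex_div_le (hf0 y) n, gridIndex_div_le (hg0 y) n,
      le_gridIndex_div_add hn (hfg1 y)]
  rw [hsplit, abs_le]
  constructor <;> linarith [one_div_nonneg.2 (n.cast_nonneg : (0 : ℝ) ≤ n)]

theorem bddAbove_range_gridSum (f : Y → ℝ) : BddAbove (Set.range fun n => M.gridSum n f) :=
  ⟨1, Set.forall_mem_range.2 fun n => gridSum_le_one n f⟩

theorem gridSum_le_integral (n : ℕ) (f : Y → ℝ) : M.gridSum n f ≤ M.integral f :=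
  le_ciSup (bddAbove_range_gridSum f) n

theorem integral_nonneg (f : Y → ℝ) : 0 ≤ M.integral f :=
  (gridSum_nonneg 0 f).trans (gridSum_le_integral 0 f)

theorem integral_le_gridSum_add {f : Y → ℝ} (hf0 : ∀ y, 0 ≤ f y) (hf1 : ∀ y, f y ≤ 1) {n : ℕ}
    (hn : 0 < n) : M.integral f ≤ M.gridSum n f + 1 / n :=
  ciSup_le fun m => gridSum_le_gridSum_add hf0 hf1 m hn

theorem tendsto_gridSum {f : Y → ℝ} (hf0 : ∀ y, 0 ≤ f y) (hf1 : ∀ y, f y ≤ 1) :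
    Tendsto (fun n => M.gridSum n f) atTop (𝓝 (M.integral f)) := by
  have hlow : Tendsto (fun n : ℕ => M.integral f - 1 / n) atTop (𝓝 (M.integral f)) := by
    simpa using tendsto_one_div_atTop_nhds_zero_nat.const_sub (M.integral f)
  refine tendsto_of_tendsto_of_tendsto_of_le_of_le' hlow tendsto_const_nhds ?_
    (Eventually.of_forall fun n => gridSum_le_integral n f)
  filter_upwards [eventually_gt_atTop 0] with n hn
  linarith [integral_le_gridSum_add (M := M) hf0 hf1 hn]

theorem integral_add {f g : Y → ℝ} (hf0 : ∀ y, 0 ≤ f y) (hg0 : ∀ y, 0 ≤ g y)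
    (hfg1 : ∀ y, f y + g y ≤ 1) :
    M.integral (fun y => f y + g y) = M.integral f + M.integral g := by
  have hf1 y : f y ≤ 1 := by linarith [hg0 y, hfg1 y]
  have hg1 y : g y ≤ 1 := by linarith [hf0 y, hfg1 y]
  refine tendsto_nhds_unique (tendsto_gridSum (fun y => add_nonneg (hf0 y) (hg0 y)) hfg1) ?_
  refine ((tendsto_gridSum hf0 hf1).add (tendsto_gridSum hg0 hg1)).congr_dist ?_
  refine squeeze_zero' (Eventually.of_forall fun n => dist_nonneg) ?_
    (tendsto_const_div_atTop_nhds_zero_nat 2)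
  filter_upwards [eventually_gt_atTop 0] with n hn
  rw [Real.dist_eq, abs_sub_comm]
  exact abs_gridSum_add_sub_le hf0 hg0 hfg1 hn

theorem integral_le_mul {f : Y → ℝ} (hf0 : ∀ y, 0 ≤ f y) {A : Set Y} {c : ℝ}
    (hf : ∀ y, f y ≤ A.indicator (fun _ => c) y) : M.integral f ≤ c * M.m A := by
  classical
  refine ciSup_le fun n => ?_
  calc M.gridSum n f
      ≤ M.fiberSum univ (fun y => decide (y ∈ A)) (fun b => if b then c else 0) :=
        fiberSum_le_fiberSum (fun _ => gridIndex_mem_range _ _) (fun _ => mem_univ _)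
          fun y => by simpa [Set.indicator_apply] using (gridIndex_div_le (hf0 y) n).trans (hf y)
    _ = c * M.m A := by simp [fiberSum, Set.preimage]

theorem integral_one : M.integral (fun _ => 1) = 1 := by
  refine le_antisymm (ciSup_le fun n => gridSum_le_one n _) ?_
  calc (1 : ℝ) = M.fiberSum (range 1) (fun _ => 0) (fun _ => 1) :=
        (fiberSum_const (fun _ => self_mem_range_succ 0) 1).symm
    _ = M.gridSum 1 (fun _ => 1) :=
        fiberSum_eq_fiberSum (fun _ => self_mem_range_succ 0) (fun _ => gridIndex_mem_range _ _)
          fun _ => by simp [gridIndex]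
    _ ≤ M.integral (fun _ => 1) := gridSum_le_integral 1 _

theorem integral_comp_smul (f : Y → ℝ) (g : G) :
    M.integral (fun y => f (g • y)) = M.integral f := by
  simp only [integral, gridSum_comp_smul]

end Integral

section Product

variable {G : Type*} [Group G] {Y Y' Z : Type*} [MulAction G Y] [MulAction G Y']
  [MulAction G Z]

/-- The image of the product of `M` and `N` under an equivariant map `op`: the law of `op a b`
for independent samples `a ∼ M`, `b ∼ N`. -/
noncomputable def map₂ (op : Y → Y' → Z)
    (hop : ∀ (g : G) a b, op (g • a) (g • b) = g • op a b)
    (M : InvariantMean G Y) (N : InvariantMean G Y') : InvariantMean G Z where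
  m C := M.integral fun a => N.m {b | op a b ∈ C}
  nonneg _ := integral_nonneg _
  total := by simp only [Set.mem_univ, Set.ofPred_true, N.total, integral_one]
  add_disjoint C D hCD := by
    have hdisj a : Disjoint {b | op a b ∈ C} {b | op a b ∈ D} := hCD.preimage (op a)
    simp only [Set.mem_union, Set.ofPred_or, N.add_disjoint _ _ (hdisj _)]
    exact integral_add (fun _ => N.nonneg _) (fun _ => N.nonneg _)
      fun a => N.add_disjoint _ _ (hdisj a) ▸ N.m_le_one _
  invariant g C := by
    have hfiber a :
        {b | op a b ∈ (g • ·) '' C} = (g⁻¹ • ·) ⁻¹' {b | op (g⁻¹ • a) b ∈ C} := by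
      ext b
      simp [Set.image_smul, Set.mem_smul_set_iff_inv_smul_mem, ← hop]
    simp only [hfiber, N.m_preimage_smul]
    exact integral_comp_smul (fun a => N.m {b | op a b ∈ C}) g⁻¹

theorem map₂_le_mul {op : Y → Y' → Z} (hop : ∀ (g : G) a b, op (g • a) (g • b) = g • op a b)
    (M : InvariantMean G Y) (N : InvariantMean G Y') {A : Set Y} {B : Set Y'} {C : Set Z}
    (h : ∀ a b, op a b ∈ C → a ∈ A ∧ b ∈ B) : (map₂ op hop M N).m C ≤ N.m B * M.m A := by
  refine integral_le_mul (fun _ => N.nonneg _) fun a => ?_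
  by_cases ha : a ∈ A
  · rw [Set.indicator_of_mem ha]
    exact N.m_mono fun b hb => (h a b hb).2
  · rw [Set.indicator_of_notMem ha, ← N.m_empty]
    exact N.m_mono fun b hb => ha (h a b hb).1

end Product

variable {G : Type*} [Group G] {Y : Type*} [MulAction G Y] {ι : Type*}

theorem tendsto_limUnder_ultrafilter (U : Ultrafilter ι) (M : ι → InvariantMean G Y)
    (A : Set Y) :
    Tendsto (fun i => (M i).m A) U (𝓝 (limUnder U fun i => (M i).m A)) := by
  have hmem : (U.map fun i => (M i).m A : Filter ℝ) ≤ 𝓟 (Set.Icc 0 1) := by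
    rw [Ultrafilter.coe_map, le_principal_iff]
    exact mem_map.2 (univ_mem' fun i => ⟨(M i).nonneg A, (M i).m_le_one A⟩)
  obtain ⟨a, -, ha⟩ := isCompact_Icc.ultrafilter_le_nhds _ hmem
  exact tendsto_nhds_limUnder ⟨a, ha⟩

noncomputable def ultralimit (U : Ultrafilter ι) (M : ι → InvariantMean G Y) :
    InvariantMean G Y where
  m A := limUnder U fun i => (M i).m A
  nonneg A := ge_of_tendsto' (tendsto_limUnder_ultrafilter U M A) fun i => (M i).nonneg A
  total :=
    tendsto_nhds_unique (tendsto_limUnder_ultrafilter U M _) (by simp [InvariantMean.total])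
  add_disjoint A B hAB := by
    refine tendsto_nhds_unique (tendsto_limUnder_ultrafilter U M _) ?_
    simpa only [(M _).add_disjoint A B hAB] using
      (tendsto_limUnder_ultrafilter U M A).add (tendsto_limUnder_ultrafilter U M B)
  invariant g A := by simp only [InvariantMean.invariant]

theorem m_compl_iterate_map₂_le {op : Y → Y → Y}
    (hop : ∀ (g : G) a b, op (g • a) (g • b) = g • op a b) {C : Set Y}
    (hC : ∀ a b, a ∈ C ∨ b ∈ C → op a b ∈ C) (M : InvariantMean G Y) (k : ℕ) :
    ((map₂ op hop M)^[k] M).m Cᶜ ≤ M.m Cᶜ ^ (k + 1) := by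
  induction k with
  | zero => simp
  | succ k ih =>
    rw [Function.iterate_succ_apply']
    calc (map₂ op hop M ((map₂ op hop M)^[k] M)).m Cᶜ
        ≤ ((map₂ op hop M)^[k] M).m Cᶜ * M.m Cᶜ :=
          map₂_le_mul hop M _ fun a b hab => not_or.1 (mt (hC a b) hab)
      _ ≤ M.m Cᶜ ^ (k + 1) * M.m Cᶜ := mul_le_mul_of_nonneg_right ih (M.nonneg _)
      _ = M.m Cᶜ ^ (k + 2) := (pow_succ _ _).symm

theorem exists_m_eq_one_of_pos {op : Y → Y → Y}
    (hop : ∀ (g : G) a b, op (g • a) (g • b) = g • op a b) {C : Set Y}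
    (hC : ∀ a b, a ∈ C ∨ b ∈ C → op a b ∈ C) (M : InvariantMean G Y)
    (hM : 0 < M.m C) : ∃ M' : InvariantMean G Y, M'.m C = 1 := by
  let N k := (map₂ op hop M)^[k] M
  have hcompl : Tendsto (fun k => (N k).m Cᶜ) atTop (𝓝 0) := by
    refine squeeze_zero (fun k => (N k).nonneg _) (m_compl_iterate_map₂_le hop hC M) ?_
    refine (tendsto_pow_atTop_nhds_zero_of_lt_one (M.nonneg _) ?_).comp
      (tendsto_add_atTop_nat 1)
    linarith [M.m_compl C]
  refine ⟨ultralimit (Ultrafilter.of atTop) N, ?_⟩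
  have hlim : (ultralimit (Ultrafilter.of atTop) N).m Cᶜ = 0 :=
    tendsto_nhds_unique (tendsto_limUnder_ultrafilter _ N _)
      (hcompl.mono_left (Ultrafilter.of_le _))
  linarith [(ultralimit (Ultrafilter.of atTop) N).m_compl C]

end InvariantMean

theorem mean_full_weight_of_mean_half_general
    (G : Type*) [Group G] (X : Type*) [DecidableEq X] [MulAction G X] (x₀ : X)
    (h : ∃ M : InvariantMean G (Finset X), M.m {E : Finset X | x₀ ∈ E} = 1 / 2) :
    ∃ M : InvariantMean G (Finset X), M.m {E : Finset X | x₀ ∈ E} = 1 := by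
  obtain ⟨M, hM⟩ := h
  exact M.exists_m_eq_one_of_pos (op := (· ∪ ·)) (fun g E F => Finset.smul_finset_union.symm)
    (fun E F hEF => Finset.mem_union.2 hEF) (by rw [hM]; norm_num)

theorem mean_full_weight_of_mean_half
    (G : Type*) [Group G] (X : Type*) [DecidableEq X] [MulAction G X]
    [MulAction.IsPretransitive G X] (x₀ : X)
    (h : ∃ M : InvariantMean G (Finset X), M.m {E : Finset X | x₀ ∈ E} = 1 / 2) :
    ∃ M : InvariantMean G (Finset X), M.m {E : Finset X | x₀ ∈ E} = 1 :=
  mean_full_weight_of_mean_half_general G X x₀ h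
end
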